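/- arXiv:1309.3114 — 9 statements merged into one kernel-verified Lean document; each statement's English description precedes it below -/
import Mathlib

section
/- Let Γ be a countable group acting by homeomorphisms on a Cantor space X, and assume that for every nonempty open set U ⊆ X there exist distinct points x, y ∈ U and γ ∈ Γ with γ·x = y. Then the set Ω = {x ∈ X : x is an accumulation point of the orbit Γ·x} is a dense Gδ subset of X. -/
/-!
Fix a compatible metric. A point is an accumulation point of its orbit exactly when, for every
`ε > 0`, some group element moves it by a positive distance less than `ε`. For fixed `ε` the
points with this property form an open set, and it is dense: inside any nonempty open set,
shrunk to diameter below `ε`, the hypothesis provides a point moved within that set. Hence the set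
of such points is a countable intersection of dense open sets, which is dense by the Baire category
theorem for compact metrizable spaces.
-/

open Set Metric

namespace MulAction

variable (Γ : Type*) {X : Type*} [Monoid Γ] [MulAction Γ X] [PseudoMetricSpace X]

def displacedWithin (ε : ℝ) : Set X :=
  {x | ∃ γ : Γ, γ • x ≠ x ∧ dist (γ • x) x < ε}

theorem mem_closure_orbit_diff_iff (x : X) :
    x ∈ closure (orbit Γ x \ {x}) ↔ ∀ n : ℕ, x ∈ displacedWithin Γ (1 / (n + 1)) := by
  simp only [Metric.mem_closure_iff, displacedWithin, mem_ofPred_eq]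
  constructor
  · intro h n
    obtain ⟨_, ⟨⟨γ, rfl⟩, hγx⟩, hdist⟩ := h (1 / (n + 1)) (by positivity)
    exact ⟨γ, hγx, by rwa [dist_comm]⟩
  · intro h ε hε
    obtain ⟨n, hn⟩ := exists_nat_one_div_lt hε
    obtain ⟨γ, hγx, hdist⟩ := h n
    exact ⟨γ • x, ⟨mem_orbit x γ, hγx⟩, by rw [dist_comm]; exact hdist.trans hn⟩

theorem setOf_mem_closure_orbit_diff_eq_iInter :
    {x : X | x ∈ closure (orbit Γ x \ {x})} = ⋂ n : ℕ, displacedWithin Γ (1 / (n + 1)) := by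
  ext x
  simp only [mem_ofPred_eq, mem_iInter, mem_closure_orbit_diff_iff]

theorem isOpen_displacedWithin [T2Space X] [ContinuousConstSMul Γ X] (ε : ℝ) :
    IsOpen (displacedWithin Γ ε : Set X) := by
  simp only [displacedWithin, ofPred_exists]
  exact isOpen_iUnion fun γ ↦ (isOpen_ne_fun (continuous_const_smul γ) continuous_id).inter
    (isOpen_lt ((continuous_const_smul γ).dist continuous_id) continuous_const)

theorem dense_displacedWithin
    (hact : ∀ U : Set X, IsOpen U → U.Nonempty → ∃ x ∈ U, ∃ y ∈ U, x ≠ y ∧ ∃ γ : Γ, γ • x = y)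
    {ε : ℝ} (hε : 0 < ε) : Dense (MulAction.displacedWithin Γ ε : Set X) := by
  refine dense_iff_inter_open.2 fun O hO ⟨x₀, hx₀⟩ ↦ ?_
  have hball : (O ∩ ball x₀ (ε / 2)).Nonempty := ⟨x₀, hx₀, mem_ball_self (half_pos hε)⟩
  obtain ⟨a, ⟨haO, ha⟩, b, ⟨-, hb⟩, hab, γ, rfl⟩ := hact _ (hO.inter isOpen_ball) hball
  refine ⟨a, haO, γ, Ne.symm hab, ?_⟩
  calc dist (γ • a) a ≤ dist (γ • a) x₀ + dist a x₀ := dist_triangle_right _ _ _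
    _ < ε / 2 + ε / 2 := add_lt_add hb ha
    _ = ε := add_halves ε

end MulAction

theorem accumulation_points_dense_Gdelta_general {X : Type*} [TopologicalSpace X] [CompactSpace X]
    [TopologicalSpace.MetrizableSpace X]
    (Γ : Type*) [Group Γ] [MulAction Γ X] [ContinuousConstSMul Γ X]
    (hact : ∀ U : Set X, IsOpen U → U.Nonempty →
      ∃ x ∈ U, ∃ y ∈ U, x ≠ y ∧ ∃ γ : Γ, γ • x = y) :
    Dense {x : X | x ∈ closure (MulAction.orbit Γ x \ {x})} ∧
      IsGδ {x : X | x ∈ closure (MulAction.orbit Γ x \ {x})} := by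
  let := TopologicalSpace.metrizableSpaceMetric X
  have hopen (n : ℕ) := MulAction.isOpen_displacedWithin Γ (X := X) (1 / (n + 1))
  have hdense (n : ℕ) : Dense (MulAction.displacedWithin Γ (1 / (n + 1)) : Set X) :=
    MulAction.dense_displacedWithin Γ hact (by positivity)
  rw [MulAction.setOf_mem_closure_orbit_diff_eq_iInter]
  exact ⟨dense_iInter_of_isOpen hopen hdense, .iInter_of_isOpen hopen⟩

/-- Lemma 3.1: for a countable group acting by homeomorphisms on a Cantor space such that
the restriction of the orbit equivalence relation to no nonempty open set is trivial,
the set of points that are accumulation points of their own orbit is a dense Gδ. -/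
theorem accumulation_points_dense_Gdelta {X : Type*} [TopologicalSpace X] [Nonempty X] [CompactSpace X]
    [TopologicalSpace.MetrizableSpace X] [TotallyDisconnectedSpace X] [PerfectSpace X]
    (Γ : Type*) [Group Γ] [Countable Γ] [MulAction Γ X] [ContinuousConstSMul Γ X]
    (hact : ∀ U : Set X, IsOpen U → U.Nonempty →
      ∃ x ∈ U, ∃ y ∈ U, x ≠ y ∧ ∃ γ : Γ, γ • x = y) :
    Dense {x : X | x ∈ closure (MulAction.orbit Γ x \ {x})} ∧
      IsGδ {x : X | x ∈ closure (MulAction.orbit Γ x \ {x})} :=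
  accumulation_points_dense_Gdelta_general Γ hact
end

section
/- Let Γ be a countable group acting by homeomorphisms on a Cantor space X such that for every nonempty open set U ⊆ X there exist distinct points x, y ∈ U and γ ∈ Γ with γ·x = y, and let [R] be the full group of the action. Let τ be a group topology on [R] which is Hausdorff and for which [R] is a Baire space. Then for every nonempty clopen subset U of X, the set Ω_U = {g ∈ [R] : g(x) = x for all x ∈ U} is τ-closed. -/
open Set

section HomeoGroupSetup

variable {X : Type*} [TopologicalSpace X]

/-- The group structure on the homeomorphism group of `X`,
with `(f * g) x = f (g x)`. -/
instance : Group (X ≃ₜ X) where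
  mul f g := g.trans f
  one := Homeomorph.refl X
  inv := Homeomorph.symm
  mul_assoc _ _ _ := Homeomorph.ext fun _ => rfl
  one_mul _ := Homeomorph.ext fun _ => rfl
  mul_one _ := Homeomorph.ext fun _ => rfl
  inv_mul_cancel f := Homeomorph.ext fun x => f.symm_apply_apply x

@[simp] lemma Homeomorph.mul_apply' (f g : X ≃ₜ X) (x : X) : (f * g) x = f (g x) := rfl

end HomeoGroupSetup


section FullGroupGamma

/-- The full group of an action of a group `Γ` by homeomorphisms on `X`: all
homeomorphisms `g` of `X` such that every `g x` lies in the `Γ`-orbit of `x`. -/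
def fullGroup (Γ : Type*) [Group Γ] (X : Type*) [TopologicalSpace X] [MulAction Γ X] :
    Subgroup (X ≃ₜ X) where
  carrier := {g : X ≃ₜ X | ∀ x : X, ∃ γ : Γ, g x = γ • x}
  one_mem' := fun x => ⟨1, (one_smul Γ x).symm⟩
  mul_mem' := by
    intro a b ha hb x
    obtain ⟨γ, hγ⟩ := hb x
    obtain ⟨δ, hδ⟩ := ha (b x)
    refine ⟨δ * γ, ?_⟩
    show a (b x) = (δ * γ) • x
    rw [hδ, hγ, mul_smul]
  inv_mem' := by
    intro a ha x
    obtain ⟨γ, hγ⟩ := ha ((a⁻¹ : X ≃ₜ X) x)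
    have hx : a ((a⁻¹ : X ≃ₜ X) x) = x := a.apply_symm_apply x
    rw [hx] at hγ
    exact ⟨γ⁻¹, eq_inv_smul_iff.mpr hγ.symm⟩

end FullGroupGamma

/-!
If `g` fixes `U` pointwise, it has support disjoint from that of any `h` fixing `Uᶜ` pointwise,
so the two commute. Conversely, if `g x ≠ x` for some `x ∈ U`, choose an open `W ∋ x` inside `U`
with `g W ∩ W = ∅`. The hypothesis on `Γ` gives `a ≠ γ • a` in `W`; exchanging a small clopen
neighbourhood `V` of `a` with `γ • V` gives an element `h` of the full group supported in `W` and
moving `a`, and then `g (h a) ≠ g a = h (g a)`. So `Ω_U` is the centralizer of the set of elements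
of `[R]` fixing `Uᶜ` pointwise, and centralizers are closed in a Hausdorff topological group.
-/

namespace Homeomorph

variable {X : Type*} [TopologicalSpace X]

open Classical in
noncomputable def swapImageFun (φ : X ≃ₜ X) (V : Set X) : X → X :=
  V.piecewise φ ((φ '' V).piecewise φ.symm id)

variable (φ : X ≃ₜ X) {V : Set X} {x : X}

lemma swapImageFun_of_mem (hx : x ∈ V) : swapImageFun φ V x = φ x := by
  simp [swapImageFun, hx]

lemma swapImageFun_of_mem_image (hx : x ∉ V) (hx' : x ∈ φ '' V) :
    swapImageFun φ V x = φ.symm x := by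
  simp [swapImageFun, hx, hx']

lemma swapImageFun_of_notMem (hx : x ∉ V) (hx' : x ∉ φ '' V) : swapImageFun φ V x = x := by
  simp [swapImageFun, hx, hx']

lemma swapImageFun_involutive (hdisj : Disjoint V (φ '' V)) :
    Function.Involutive (swapImageFun φ V) := by
  intro x
  by_cases hx : x ∈ V
  · have hφx : φ x ∈ φ '' V := mem_image_of_mem φ hx
    rw [swapImageFun_of_mem φ hx, swapImageFun_of_mem_image φ (hdisj.notMem_of_mem_right hφx) hφx,
      φ.symm_apply_apply]
  by_cases hx' : x ∈ φ '' V
  · have hφx : φ.symm x ∈ V := by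
      obtain ⟨y, hy, rfl⟩ := hx'
      rwa [φ.symm_apply_apply]
    rw [swapImageFun_of_mem_image φ hx hx', swapImageFun_of_mem φ hφx, φ.apply_symm_apply]
  · rw [swapImageFun_of_notMem φ hx hx', swapImageFun_of_notMem φ hx hx']

lemma continuous_swapImageFun (hV : IsClopen V) : Continuous (swapImageFun φ V) := by
  classical
  have hφV : IsClopen (φ '' V) := by
    rw [φ.image_eq_preimage_symm]
    exact hV.preimage φ.symm.continuous
  refine φ.continuous.piecewise (by simp [hV.frontier_eq]) ?_
  exact φ.symm.continuous.piecewise (by simp [hφV.frontier_eq]) continuous_id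

noncomputable def swapImage (hV : IsClopen V) (hdisj : Disjoint V (φ '' V)) : X ≃ₜ X where
  toEquiv := (swapImageFun_involutive φ hdisj).toPerm
  continuous_toFun := continuous_swapImageFun φ hV
  continuous_invFun := continuous_swapImageFun φ hV

@[simp] lemma swapImage_apply (hV : IsClopen V) (hdisj : Disjoint V (φ '' V)) (x : X) :
    swapImage φ hV hdisj x = swapImageFun φ V x := rfl

lemma commute_of_fixes_of_fixes_compl {g h : X ≃ₜ X} {U : Set X} (hg : ∀ x ∈ U, g x = x)
    (hh : ∀ x ∉ U, h x = x) : Commute g h := by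
  have hdisj : Equiv.Perm.Disjoint g.toEquiv h.toEquiv := fun x =>
    (em (x ∈ U)).imp (hg x) (hh x)
  exact Homeomorph.ext fun x => DFunLike.congr_fun hdisj.commute.eq x

lemma not_commute_of_mapsTo_compl {g h : X ≃ₜ X} {W : Set X} {a : X} (ha : a ∈ W)
    (hha : h a ≠ a) (hh : ∀ y ∉ W, h y = y) (hg : MapsTo g W Wᶜ) : ¬Commute g h := by
  intro hcomm
  have hga : g (h a) = g a := by
    rw [← mul_apply, hcomm.eq, mul_apply, hh _ (hg ha)]
  exact hha (g.injective hga)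

end Homeomorph

section Separation

variable {X : Type*} [TopologicalSpace X] [T2Space X]

lemma exists_isOpen_subset_mapsTo_compl {g : X ≃ₜ X} {U : Set X} (hU : IsOpen U) {x : X}
    (hxU : x ∈ U) (hgx : g x ≠ x) :
    ∃ W, IsOpen W ∧ x ∈ W ∧ W ⊆ U ∧ MapsTo g W Wᶜ := by
  obtain ⟨O₁, O₂, hO₁, hO₂, hxO₁, hgxO₂, hO⟩ := t2_separation hgx.symm
  refine ⟨U ∩ O₁ ∩ g ⁻¹' O₂, (hU.inter hO₁).inter (hO₂.preimage g.continuous),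
    ⟨⟨hxU, hxO₁⟩, hgxO₂⟩, fun y hy => hy.1.1, fun y hy hgy => ?_⟩
  exact hO.notMem_of_mem_left hgy.1.2 hy.2

lemma exists_isClopen_subset_disjoint_image [CompactSpace X] [TotallyDisconnectedSpace X]
    (φ : X ≃ₜ X) {W : Set X} (hW : IsOpen W) {a : X} (ha : a ∈ W) (hφa : φ a ∈ W)
    (hne : a ≠ φ a) :
    ∃ V, IsClopen V ∧ a ∈ V ∧ V ⊆ W ∧ φ '' V ⊆ W ∧ Disjoint V (φ '' V) := by
  obtain ⟨P₁, P₂, hP₁, hP₂, haP₁, hφaP₂, hP⟩ := t2_separation hne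
  obtain ⟨V, hV, haV, hVsub⟩ := compact_exists_isClopen_in_isOpen
    ((hW.inter hP₁).inter ((hW.inter hP₂).preimage φ.continuous))
    (⟨⟨ha, haP₁⟩, hφa, hφaP₂⟩ : a ∈ W ∩ P₁ ∩ φ ⁻¹' (W ∩ P₂))
  have hφV : φ '' V ⊆ W ∩ P₂ := image_subset_iff.mpr fun y hy => (hVsub hy).2
  exact ⟨V, hV, haV, fun y hy => (hVsub hy).1.1, fun y hy => (hφV hy).1,
    hP.mono (fun y hy => (hVsub hy).1.2) fun y hy => (hφV hy).2⟩

end Separation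

section FullGroup

variable {X : Type*} [TopologicalSpace X] (Γ : Type*) [Group Γ] [MulAction Γ X]
  [ContinuousConstSMul Γ X]

lemma swapImage_smul_mem_fullGroup (γ : Γ) {V : Set X} (hV : IsClopen V)
    (hdisj : Disjoint V (Homeomorph.smul γ '' V)) :
    Homeomorph.swapImage (Homeomorph.smul γ) hV hdisj ∈ fullGroup Γ X := by
  intro x
  by_cases hx : x ∈ V
  · exact ⟨γ, by simp [Homeomorph.swapImageFun_of_mem _ hx]⟩
  by_cases hx' : x ∈ Homeomorph.smul γ '' V
  · exact ⟨γ⁻¹, by simp [Homeomorph.swapImageFun_of_mem_image _ hx hx']⟩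
  · exact ⟨1, by simp [Homeomorph.swapImageFun_of_notMem _ hx hx']⟩

lemma exists_mem_fullGroup_supported_ne [CompactSpace X] [T2Space X] [TotallyDisconnectedSpace X]
    {W : Set X} (hW : IsOpen W) (hmove : ∃ a ∈ W, ∃ b ∈ W, a ≠ b ∧ ∃ γ : Γ, γ • a = b) :
    ∃ h ∈ fullGroup Γ X, ∃ a ∈ W, h a ≠ a ∧ ∀ y ∉ W, h y = y := by
  obtain ⟨a, ha, _, hb, hab, γ, rfl⟩ := hmove
  obtain ⟨V, hV, haV, hVW, hφVW, hdisj⟩ :=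
    exists_isClopen_subset_disjoint_image (Homeomorph.smul γ) hW ha hb hab
  refine ⟨_, swapImage_smul_mem_fullGroup Γ γ hV hdisj, a, ha, ?_, fun y hy => ?_⟩
  · simpa [Homeomorph.swapImageFun_of_mem _ haV] using hab.symm
  · simpa using Homeomorph.swapImageFun_of_notMem _ (fun h => hy (hVW h)) fun h => hy (hφVW h)

lemma setOf_fixes_eq_centralizer [CompactSpace X] [T2Space X] [TotallyDisconnectedSpace X]
    (hact : ∀ W : Set X, IsOpen W → W.Nonempty → ∃ a ∈ W, ∃ b ∈ W, a ≠ b ∧ ∃ γ : Γ, γ • a = b)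
    {U : Set X} (hU : IsOpen U) :
    {g : fullGroup Γ X | ∀ x ∈ U, (g : X ≃ₜ X) x = x} =
      Set.centralizer {h : fullGroup Γ X | ∀ x ∉ U, (h : X ≃ₜ X) x = x} := by
  ext g
  refine ⟨fun hg h hh => Subtype.ext ?_, fun hg x hxU => ?_⟩
  · exact (Homeomorph.commute_of_fixes_of_fixes_compl hg hh).symm.eq
  by_contra hgx
  obtain ⟨W, hW, hxW, hWU, hgW⟩ := exists_isOpen_subset_mapsTo_compl hU hxU hgx
  obtain ⟨h, hmem, a, haW, hha, hhW⟩ :=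
    exists_mem_fullGroup_supported_ne Γ hW (hact W hW ⟨x, hxW⟩)
  have hfix : ∀ y ∉ U, h y = y := fun y hy => hhW y fun hyW => hy (hWU hyW)
  exact Homeomorph.not_commute_of_mapsTo_compl haW hha hhW hgW
    (congrArg Subtype.val (hg ⟨h, hmem⟩ hfix)).symm

end FullGroup

theorem pointwise_fixing_closed_general {X : Type*} [TopologicalSpace X] [CompactSpace X]
    [TopologicalSpace.MetrizableSpace X] [TotallyDisconnectedSpace X]
    (Γ : Type*) [Group Γ] [MulAction Γ X] [ContinuousConstSMul Γ X]
    (hact : ∀ U : Set X, IsOpen U → U.Nonempty →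
      ∃ x ∈ U, ∃ y ∈ U, x ≠ y ∧ ∃ γ : Γ, γ • x = y)
    (τ : TopologicalSpace ↥(fullGroup Γ X))
    (hgrp : @IsTopologicalGroup ↥(fullGroup Γ X) τ _)
    (hT2 : @T2Space ↥(fullGroup Γ X) τ)
    (U : Set X) (hU : IsClopen U) :
    @IsClosed ↥(fullGroup Γ X) τ
      {g : ↥(fullGroup Γ X) | ∀ x ∈ U, (g : X ≃ₜ X) x = x} := by
  let _ := τ
  rw [setOf_fixes_eq_centralizer Γ hact hU.isOpen]
  exact Set.isClosed_centralizer _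

/-- Lemma 3.2: for any Hausdorff Baire group topology `τ` on the full group and any
nonempty clopen `U ⊆ X`, the set of elements fixing `U` pointwise is `τ`-closed. -/
theorem pointwise_fixing_closed {X : Type*} [TopologicalSpace X] [Nonempty X] [CompactSpace X]
    [TopologicalSpace.MetrizableSpace X] [TotallyDisconnectedSpace X] [PerfectSpace X]
    (Γ : Type*) [Group Γ] [Countable Γ] [MulAction Γ X] [ContinuousConstSMul Γ X]
    (hact : ∀ U : Set X, IsOpen U → U.Nonempty →
      ∃ x ∈ U, ∃ y ∈ U, x ≠ y ∧ ∃ γ : Γ, γ • x = y)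
    (τ : TopologicalSpace ↥(fullGroup Γ X))
    (hgrp : @IsTopologicalGroup ↥(fullGroup Γ X) τ _)
    (hT2 : @T2Space ↥(fullGroup Γ X) τ)
    (hBaire : @BaireSpace ↥(fullGroup Γ X) τ)
    (U : Set X) (hU : IsClopen U) (hUne : U.Nonempty) :
    @IsClosed ↥(fullGroup Γ X) τ
      {g : ↥(fullGroup Γ X) | ∀ x ∈ U, (g : X ≃ₜ X) x = x} :=
  pointwise_fixing_closed_general Γ hact τ hgrp hT2 U hU
end

section
/- Let Γ be a countable group acting by homeomorphisms on a Cantor space X such that for every nonempty open set U ⊆ X there exist distinct points x, y ∈ U and γ ∈ Γ with γ·x = y, and let [R] be the full group of the action. Let τ be a group topology on [R] which is Hausdorff and for which [R] is a Baire space. Then for every point x ∈ X, the set {g ∈ [R] : g(x) = x} is both τ-closed and τ-open. -/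
open Set

/-!
The full group is locally moving: every nonempty open set `W` supports a nontrivial element,
namely the involution exchanging a small clopen set `A ⊆ W` with a disjoint translate
`γ • A ⊆ W`. For a locally moving group, the elements supported in a clopen set `U` are
exactly those commuting with everything supported in `Uᶜ`, so they form a closed subgroup for
any Hausdorff group topology. Since `g • U ⊆ U` holds iff conjugation by `g` maps this subgroup
into itself, the setwise stabilizer of `U` is closed; its cosets are indexed by the countably
many clopen sets, so by the Baire category theorem it is open. Clopen sets separate points, so
the stabilizer of a point `x` has an open complement; its cosets are indexed by the countable
orbit `Γ • x`, and Baire again makes it open.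
-/

open MulAction
open scoped Pointwise

section HomeomorphAction

variable {X : Type*} [TopologicalSpace X]

instance Homeomorph.applyMulAction : MulAction (X ≃ₜ X) X where
  smul f x := f x
  one_smul _ := rfl
  mul_smul _ _ _ := rfl

instance : FaithfulSMul (X ≃ₜ X) X := ⟨fun h => Homeomorph.ext h⟩

instance (G : Subgroup (X ≃ₜ X)) : ContinuousConstSMul G X :=
  ⟨fun g => (g : X ≃ₜ X).continuous⟩

end HomeomorphAction

section FixingSubgroup

variable {G X : Type*} [Group G] [MulAction G X]

lemma smul_mem_of_mem_fixingSubgroup_compl {s : Set X} {g : G} (hg : g ∈ fixingSubgroup G sᶜ)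
    {x : X} (hx : x ∈ s) : g • x ∈ s := by
  by_contra h
  have hgx : g • g • x = g • x := hg ⟨_, h⟩
  exact h ((smul_left_cancel g hgx).symm ▸ hx)

lemma commute_of_mem_fixingSubgroup_of_mem_fixingSubgroup_compl [FaithfulSMul G X] {s : Set X}
    {g h : G} (hg : g ∈ fixingSubgroup G s) (hh : h ∈ fixingSubgroup G sᶜ) : Commute g h := by
  refine smul_left_injective' (α := X) (funext fun x => ?_)
  simp only [mul_smul]
  by_cases hx : x ∈ s
  · rw [hg ⟨x, hx⟩, hg ⟨_, smul_mem_of_mem_fixingSubgroup_compl hh hx⟩]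
  · rw [← compl_compl s] at hg
    rw [hh ⟨x, hx⟩, hh ⟨_, smul_mem_of_mem_fixingSubgroup_compl hg hx⟩]

end FixingSubgroup

lemma exists_isOpen_disjoint_smul {G X : Type*} [Group G] [MulAction G X] [TopologicalSpace X]
    [T2Space X] [ContinuousConstSMul G X] {g : G} {x : X} (hgx : g • x ≠ x) {V : Set X}
    (hV : IsOpen V) (hxV : x ∈ V) :
    ∃ B, IsOpen B ∧ x ∈ B ∧ B ⊆ V ∧ Disjoint B (g • B) := by
  obtain ⟨O, O', hO, hO', hxO, hgxO', hOO'⟩ := t2_separation hgx.symm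
  refine ⟨V ∩ O ∩ g⁻¹ • O', (hV.inter hO).inter (hO'.smul _), ⟨⟨hxV, hxO⟩, ?_⟩,
    fun y hy => hy.1.1, hOO'.mono (fun y hy => hy.1.2) ?_⟩
  · rwa [mem_inv_smul_set_iff]
  · calc g • (V ∩ O ∩ g⁻¹ • O')
        _ ⊆ g • g⁻¹ • O' := smul_set_mono inter_subset_right
        _ = O' := smul_inv_smul g O'

theorem Subgroup.isOpen_of_isClosed_of_countable_quotient {G : Type*} [Group G]
    [TopologicalSpace G] [IsTopologicalGroup G] [BaireSpace G] {H : Subgroup G}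
    [Countable (G ⧸ H)] (hH : IsClosed (H : Set G)) : IsOpen (H : Set G) := by
  have hcover : ⋃ q : G ⧸ H, q.out • (H : Set G) = univ := by
    refine eq_univ_of_forall fun g => mem_iUnion.mpr ⟨g, ?_⟩
    obtain ⟨h, hh⟩ := QuotientGroup.mk_out_eq_mul H g
    exact ⟨(h⁻¹ : H), (h⁻¹).2, by simp [hh]⟩
  obtain ⟨q, g, hg⟩ :=
    nonempty_interior_of_iUnion_of_closed (fun q : G ⧸ H => hH.smul q.out) hcover
  rw [interior_smul] at hg
  obtain ⟨h, hh, -⟩ := hg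
  exact H.isOpen_of_mem_nhds (mem_interior_iff_mem_nhds.mp hh)

lemma MulAction.countable_quotient_stabilizer {G α : Type*} [Group G] [MulAction G α] {a : α}
    (h : (orbit G a).Countable) : Countable (G ⧸ stabilizer G a) :=
  have := h.to_subtype
  .of_equiv _ (orbitEquivQuotientStabilizer G a)

lemma countable_setOf_isClopen (X : Type*) [TopologicalSpace X] [CompactSpace X] [T2Space X]
    [TotallyDisconnectedSpace X] [SecondCountableTopology X] :
    {U : Set X | IsClopen U}.Countable := by
  have := TopologicalSpace.Clopens.countable_iff_secondCountable.mpr ‹SecondCountableTopology X›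
  convert countable_range ((↑) : TopologicalSpace.Clopens X → Set X)
  ext U
  exact ⟨fun hU => ⟨⟨U, hU⟩, rfl⟩, by rintro ⟨V, rfl⟩; exact V.isClopen⟩

/-- `fixingSubgroup G Uᶜ` is the rigid stabilizer of `U`: the elements supported in `U`. -/
def IsLocallyMoving (G X : Type*) [Group G] [TopologicalSpace X] [MulAction G X] : Prop :=
  ∀ U : Set X, IsOpen U → U.Nonempty → fixingSubgroup G Uᶜ ≠ ⊥

namespace IsLocallyMoving

variable {G X : Type*} [Group G] [TopologicalSpace X] [MulAction G X]

lemma exists_ne_one_movedBy_subset (hG : IsLocallyMoving G X) {U : Set X} (hU : IsOpen U)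
    (hne : U.Nonempty) :
    ∃ g : G, g ≠ 1 ∧ (fixedBy X g)ᶜ ⊆ U := by
  obtain ⟨g, hg, hg1⟩ := (Subgroup.bot_or_exists_ne_one _).resolve_left (hG U hU hne)
  exact ⟨g, hg1, (mem_fixingSubgroup_compl_iff_movedBy_subset G).mp hg⟩

variable [FaithfulSMul G X]

lemma fixingSubgroup_compl_le_iff (hG : IsLocallyMoving G X) {U V : Set X} (hU : IsOpen U)
    (hV : IsClosed V) :
    fixingSubgroup G Uᶜ ≤ fixingSubgroup G Vᶜ ↔ U ⊆ V := by
  refine ⟨fun h => ?_, fun h => fixingSubgroup_antitone G X (compl_subset_compl.mpr h)⟩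
  by_contra hUV
  obtain ⟨x, hxU, hxV⟩ := not_subset.mp hUV
  obtain ⟨k, hk1, hkUV⟩ :=
    hG.exists_ne_one_movedBy_subset (hU.inter hV.isOpen_compl) ⟨x, hxU, hxV⟩
  have hkV : (fixedBy X k)ᶜ ⊆ V := (mem_fixingSubgroup_compl_iff_movedBy_subset G).mp
    (h ((mem_fixingSubgroup_compl_iff_movedBy_subset G).mpr (hkUV.trans inter_subset_left)))
  refine hk1 ((fixedBy_eq_univ_iff_eq_one (α := X)).mp (compl_empty_iff.mp ?_))
  exact eq_empty_of_forall_notMem fun y hy => (hkUV hy).2 (hkV hy)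

variable [T2Space X] [ContinuousConstSMul G X]

lemma mem_fixingSubgroup_of_commute (hG : IsLocallyMoving G X) {V : Set X} (hV : IsOpen V)
    {f : G} (hf : ∀ k ∈ fixingSubgroup G Vᶜ, Commute k f) : f ∈ fixingSubgroup G V := by
  refine (mem_fixingSubgroup_iff G).mpr fun x hx => ?_
  by_contra hfx
  obtain ⟨B, hB, hxB, hBV, hdisj⟩ := exists_isOpen_disjoint_smul hfx hV hx
  obtain ⟨k, hk1, hkB⟩ := hG.exists_ne_one_movedBy_subset hB ⟨x, hxB⟩
  have hk : k ∈ fixingSubgroup G Vᶜ :=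
    (mem_fixingSubgroup_compl_iff_movedBy_subset G).mpr (hkB.trans hBV)
  exact not_commute_of_disjoint_movedBy_preimage hk1 (hdisj.mono hkB (smul_set_mono hkB))
    (hf k hk)

lemma centralizer_fixingSubgroup (hG : IsLocallyMoving G X) {U : Set X} (hU : IsClosed U) :
    Subgroup.centralizer (fixingSubgroup G U : Set G) = fixingSubgroup G Uᶜ := by
  ext f
  rw [Subgroup.mem_centralizer_iff]
  refine ⟨fun hf => hG.mem_fixingSubgroup_of_commute hU.isOpen_compl fun k hk => ?_,
    fun hf k hk => commute_of_mem_fixingSubgroup_of_mem_fixingSubgroup_compl hk hf⟩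
  rw [compl_compl] at hk
  exact hf k hk

variable [TopologicalSpace G] [IsTopologicalGroup G] [T2Space G]

lemma isClosed_fixingSubgroup_compl (hG : IsLocallyMoving G X) {U : Set X} (hU : IsClosed U) :
    IsClosed (fixingSubgroup G Uᶜ : Set G) := by
  rw [← hG.centralizer_fixingSubgroup hU]
  exact isClosed_centralizer _

lemma isClosed_setOf_smul_subset (hG : IsLocallyMoving G X) {U : Set X} (hU : IsClopen U) :
    IsClosed {g : G | g • U ⊆ U} := by
  set R := fixingSubgroup G Uᶜ
  have hconj : ∀ g : G, g • U ⊆ U ↔ ∀ h ∈ R, g * h * g⁻¹ ∈ R := fun g => by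
    rw [← hG.fixingSubgroup_compl_le_iff (hU.isOpen.smul g) hU.isClosed, ← smul_set_compl,
      SubMulAction.fixingSubgroup_smul_eq_fixingSubgroup_map_conj, Subgroup.map_le_iff_le_comap]
    rfl
  have hR : IsClosed (R : Set G) := hG.isClosed_fixingSubgroup_compl hU.isClosed
  simp_rw [hconj, ofPred_forall]
  exact isClosed_biInter fun h _ => hR.preimage (by fun_prop)

lemma isClosed_stabilizer (hG : IsLocallyMoving G X) {U : Set X} (hU : IsClopen U) :
    IsClosed (stabilizer G U : Set G) := by
  have hstab :
      (stabilizer G U : Set G) = {g : G | g • U ⊆ U} ∩ {g : G | g • U ⊆ U}⁻¹ := by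
    ext g
    simp [subset_antisymm_iff, subset_smul_set_iff]
  rw [hstab]
  exact (hG.isClosed_setOf_smul_subset hU).inter (hG.isClosed_setOf_smul_subset hU).inv

variable [CompactSpace X] [TotallyDisconnectedSpace X] [SecondCountableTopology X] [BaireSpace G]

lemma isOpen_stabilizer (hG : IsLocallyMoving G X) {U : Set X} (hU : IsClopen U) :
    IsOpen (stabilizer G U : Set G) := by
  have horbit : orbit G U ⊆ {V : Set X | IsClopen V} := by
    rintro _ ⟨g, rfl⟩
    exact ⟨hU.isClosed.smul g, hU.isOpen.smul g⟩
  have := countable_quotient_stabilizer ((countable_setOf_isClopen X).mono horbit)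
  exact Subgroup.isOpen_of_isClosed_of_countable_quotient (hG.isClosed_stabilizer hU)

lemma isClosed_stabilizer_point (hG : IsLocallyMoving G X) (x : X) :
    IsClosed (stabilizer G x : Set G) := by
  refine isOpen_compl_iff.mp (isOpen_iff_forall_mem_open.mpr fun g hg => ?_)
  have hgx : x ≠ g⁻¹ • x := fun h => hg (eq_inv_smul_iff.mp h)
  obtain ⟨U, hU, hxU, hgxU⟩ := exists_isClopen_of_totally_separated hgx
  refine ⟨g • (stabilizer G U : Set G), ?_, (hG.isOpen_stabilizer hU).smul g,
    ⟨1, one_mem _, mul_one g⟩⟩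
  rintro _ ⟨s, hs, rfl⟩ hsx
  have hsx' : s • x = g⁻¹ • x := eq_inv_smul_iff.mpr ((mul_smul g s x).symm.trans hsx)
  have hs' : s • U = U := hs
  exact hgxU (hsx' ▸ hs' ▸ smul_mem_smul_set hxU)

end IsLocallyMoving

section FullGroup

variable {Γ X : Type*} [Group Γ] [MulAction Γ X]

open Classical in
noncomputable def swapSmulFun (γ : Γ) (A : Set X) (z : X) : X :=
  if z ∈ A then γ • z else if z ∈ γ • A then γ⁻¹ • z else z

lemma swapSmulFun_involutive {γ : Γ} {A : Set X} (hd : Disjoint A (γ • A)) :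
    Function.Involutive (swapSmulFun γ A) := by
  intro z
  by_cases hzA : z ∈ A
  · have hγz : γ • z ∈ γ • A := smul_mem_smul_set hzA
    simp [swapSmulFun, hzA, hγz, hd.notMem_of_mem_right hγz]
  by_cases hzγA : z ∈ γ • A
  · have hz : γ⁻¹ • z ∈ A := mem_smul_set_iff_inv_smul_mem.mp hzγA
    simp [swapSmulFun, hzA, hzγA, hz]
  · simp [swapSmulFun, hzA, hzγA]

variable [TopologicalSpace X] [ContinuousConstSMul Γ X]

lemma continuous_swapSmulFun (γ : Γ) {A : Set X} (hA : IsClopen A) :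
    Continuous (swapSmulFun γ A) := by
  classical
  have hγA : IsClopen (γ • A) := ⟨hA.isClosed.smul γ, hA.isOpen.smul γ⟩
  refine Continuous.if (by simp [hA.frontier_eq]) (continuous_const_smul γ) ?_
  exact Continuous.if (by simp [hγA.frontier_eq]) (continuous_const_smul γ⁻¹) continuous_id

noncomputable def swapSmul (γ : Γ) {A : Set X} (hA : IsClopen A) (hd : Disjoint A (γ • A)) :
    X ≃ₜ X where
  toEquiv := (swapSmulFun_involutive hd).toPerm
  continuous_toFun := continuous_swapSmulFun γ hA
  continuous_invFun := continuous_swapSmulFun γ hA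

variable {γ : Γ} {A : Set X} (hA : IsClopen A) (hd : Disjoint A (γ • A))

lemma swapSmul_mem_fullGroup : swapSmul γ hA hd ∈ fullGroup Γ X := by
  intro z
  show ∃ δ : Γ, swapSmulFun γ A z = δ • z
  unfold swapSmulFun
  split_ifs
  exacts [⟨γ, rfl⟩, ⟨γ⁻¹, rfl⟩, ⟨1, (one_smul Γ z).symm⟩]

lemma swapSmul_apply_of_mem {z : X} (hz : z ∈ A) : swapSmul γ hA hd z = γ • z :=
  if_pos hz

lemma swapSmul_apply_of_notMem {z : X} (hzA : z ∉ A) (hzγA : z ∉ γ • A) :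
    swapSmul γ hA hd z = z := by
  change swapSmulFun γ A z = z
  simp [swapSmulFun, hzA, hzγA]

end FullGroup

lemma isLocallyMoving_fullGroup {Γ X : Type*} [Group Γ] [TopologicalSpace X] [CompactSpace X]
    [T2Space X] [TotallyDisconnectedSpace X] [MulAction Γ X] [ContinuousConstSMul Γ X]
    (hact : ∀ U : Set X, IsOpen U → U.Nonempty →
      ∃ x ∈ U, ∃ y ∈ U, x ≠ y ∧ ∃ γ : Γ, γ • x = y) :
    IsLocallyMoving (fullGroup Γ X) X := by
  intro W hW hne
  obtain ⟨p, hpW, q, hqW, hpq, γ, rfl⟩ := hact W hW hne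
  obtain ⟨B, hB, hpB, hBW, hdB⟩ :=
    exists_isOpen_disjoint_smul hpq.symm (hW.inter (hW.smul γ⁻¹))
      ⟨hpW, mem_inv_smul_set_iff.mpr hqW⟩
  obtain ⟨A, hA, hpA, hAB⟩ := compact_exists_isClopen_in_isOpen hB hpB
  have hd : Disjoint A (γ • A) := hdB.mono hAB (smul_set_mono hAB)
  have hγAW : γ • A ⊆ W := fun z hz => by
    have := smul_set_mono (hAB.trans (hBW.trans inter_subset_right)) hz
    rwa [smul_inv_smul] at this
  rw [Ne, Subgroup.eq_bot_iff_forall]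
  push Not
  refine ⟨⟨swapSmul γ hA hd, swapSmul_mem_fullGroup hA hd⟩, ?_, fun h => hpq.symm ?_⟩
  · rintro ⟨z, hz⟩
    exact swapSmul_apply_of_notMem hA hd (fun h => hz (hBW (hAB h)).1) (fun h => hz (hγAW h))
  · simpa [swapSmul_apply_of_mem hA hd hpA] using (congrArg (· p) (congrArg Subtype.val h))

theorem point_stabilizer_clopen_general {X : Type*} [TopologicalSpace X] [CompactSpace X]
    [TopologicalSpace.MetrizableSpace X] [TotallyDisconnectedSpace X]
    (Γ : Type*) [Group Γ] [Countable Γ] [MulAction Γ X] [ContinuousConstSMul Γ X]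
    (hact : ∀ U : Set X, IsOpen U → U.Nonempty →
      ∃ x ∈ U, ∃ y ∈ U, x ≠ y ∧ ∃ γ : Γ, γ • x = y)
    (τ : TopologicalSpace ↥(fullGroup Γ X))
    (hgrp : @IsTopologicalGroup ↥(fullGroup Γ X) τ _)
    (hT2 : @T2Space ↥(fullGroup Γ X) τ)
    (hBaire : @BaireSpace ↥(fullGroup Γ X) τ)
    (x : X) :
    @IsClosed ↥(fullGroup Γ X) τ {g : ↥(fullGroup Γ X) | (g : X ≃ₜ X) x = x} ∧
      @IsOpen ↥(fullGroup Γ X) τ {g : ↥(fullGroup Γ X) | (g : X ≃ₜ X) x = x} := by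
  let := τ
  have hG := isLocallyMoving_fullGroup hact
  have hclosed : IsClosed (stabilizer (fullGroup Γ X) x : Set (fullGroup Γ X)) :=
    hG.isClosed_stabilizer_point x
  have horbit : orbit (fullGroup Γ X) x ⊆ range (· • x : Γ → X) := by
    rintro _ ⟨g, rfl⟩
    obtain ⟨γ, hγ⟩ := g.2 x
    exact ⟨γ, hγ.symm⟩
  have := countable_quotient_stabilizer ((countable_range _).mono horbit)
  exact ⟨hclosed, Subgroup.isOpen_of_isClosed_of_countable_quotient hclosed⟩

/-- Proposition 3.4: for any Hausdorff Baire group topology `τ` on the full group and any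
point `x ∈ X`, the set of elements fixing `x` is `τ`-clopen. -/
theorem point_stabilizer_clopen {X : Type*} [TopologicalSpace X] [Nonempty X] [CompactSpace X]
    [TopologicalSpace.MetrizableSpace X] [TotallyDisconnectedSpace X] [PerfectSpace X]
    (Γ : Type*) [Group Γ] [Countable Γ] [MulAction Γ X] [ContinuousConstSMul Γ X]
    (hact : ∀ U : Set X, IsOpen U → U.Nonempty →
      ∃ x ∈ U, ∃ y ∈ U, x ≠ y ∧ ∃ γ : Γ, γ • x = y)
    (τ : TopologicalSpace ↥(fullGroup Γ X))
    (hgrp : @IsTopologicalGroup ↥(fullGroup Γ X) τ _)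
    (hT2 : @T2Space ↥(fullGroup Γ X) τ)
    (hBaire : @BaireSpace ↥(fullGroup Γ X) τ)
    (x : X) :
    @IsClosed ↥(fullGroup Γ X) τ {g : ↥(fullGroup Γ X) | (g : X ≃ₜ X) x = x} ∧
      @IsOpen ↥(fullGroup Γ X) τ {g : ↥(fullGroup Γ X) | (g : X ≃ₜ X) x = x} :=
  point_stabilizer_clopen_general Γ hact τ hgrp hT2 hBaire x
end

section
/- Let Γ be a countable group acting by homeomorphisms on a Cantor space X such that for every nonempty open set U ⊆ X there exist distinct points x, y ∈ U and γ ∈ Γ with γ·x = y, and let [R] be the full group of the action. Then there is no topology τ on [R] such that ([R], τ) is a topological group, τ is Hausdorff, τ is second countable, and ([R], τ) is a Baire space. -/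
/-!
For an open set `B ⊆ X`, the elements of the full group fixing `B` pointwise are exactly those
commuting with every element supported in `B`: local swaps (`γ` on a small clopen `C`, `γ⁻¹` on
`γ • C`) detect any point of `B` that is moved. Hence `Fix(B)` is closed in every Hausdorff group
topology. By the Baire category theorem in `X`, each element of the full group agrees with a
single `γ` on some basic open set, so the full group is a countable union of cosets of such
subgroups, and the Baire category theorem in the group makes some `Fix(B)` open. But gluing swaps
supported on disjoint, shrinking clopen pieces of `B` gives one element for each `S ⊆ ℕ`, no two
agreeing on `B`: uncountably many disjoint open cosets of `Fix(B)`, impossible in a separable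
group.
-/

open Set

open Set Function Filter Topology
open scoped Pointwise

theorem preimage_eq_self_of_eqOn_id_compl {X : Type*} {f : X → X} (hf : Injective f) {s : Set X}
    (h : EqOn f id sᶜ) : f ⁻¹' s = s := by
  ext x
  refine ⟨fun hfx => ?_, fun hx => ?_⟩
  · by_contra hx
    have hfix : f x = x := h hx
    exact hx (hfix ▸ hfx)
  · by_contra hfx
    have hfix : f x = x := hf (h hfx)
    exact hfx (by rwa [mem_preimage, hfix])

namespace Homeomorph

variable {X : Type*} [TopologicalSpace X]

theorem commute_of_eqOn_id {f g : X ≃ₜ X} {s : Set X} (hf : EqOn f id sᶜ) (hg : EqOn g id s) :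
    Commute f g := by
  have hfs := Set.ext_iff.1 (preimage_eq_self_of_eqOn_id_compl f.injective hf)
  have hgs := Set.ext_iff.1 (preimage_eq_self_of_eqOn_id_compl g.injective (s := sᶜ)
    (by rwa [compl_compl]))
  ext x
  show f (g x) = g (f x)
  by_cases hx : x ∈ s
  · rw [hg hx, hg ((hfs x).2 hx)]
    rfl
  · rw [hf hx, hf ((hgs x).2 hx)]
    rfl

theorem tendstoUniformly_symm_id {X ι : Type*} [UniformSpace X] {f : ι → X ≃ₜ X} {p : Filter ι}
    (h : TendstoUniformly (fun i => ⇑(f i)) id p) :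
    TendstoUniformly (fun i => ⇑(f i).symm) id p := by
  intro u hu
  filter_upwards [h _ (symm_le_uniformity hu)] with i hi x
  simpa using hi ((f i).symm x)

def fixingSubgroup (s : Set X) : Subgroup (X ≃ₜ X) where
  carrier := {g | EqOn g id s}
  one_mem' _ _ := rfl
  mul_mem' {a b} ha hb x hx := by
    show a (b x) = x
    rw [hb hx]
    exact ha hx
  inv_mem' {a} ha x hx := a.symm_apply_eq.2 (ha hx).symm

theorem inv_mul_mem_fixingSubgroup {s : Set X} {a b : X ≃ₜ X} :
    a⁻¹ * b ∈ fixingSubgroup s ↔ EqOn a b s := by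
  refine forall₂_congr fun x _ => ?_
  exact a.symm_apply_eq.trans eq_comm

end Homeomorph

section Swap

variable {X : Type*} {Γ : Type*} [Group Γ] [MulAction Γ X]

open scoped Classical in
noncomputable def smulSwap (γ : Γ) (C : Set X) : X → X :=
  C.piecewise (γ • ·) ((γ • C).piecewise (γ⁻¹ • ·) id)

variable {γ : Γ} {C : Set X}

theorem smulSwap_of_mem {x : X} (hx : x ∈ C) : smulSwap γ C x = γ • x := by
  simp [smulSwap, hx]

theorem smulSwap_involutive (hC : Disjoint C (γ • C)) : Involutive (smulSwap γ C) := by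
  intro x
  by_cases hx : x ∈ C
  · have hγx : γ • x ∉ C := disjoint_left.1 hC.symm (smul_mem_smul_set hx)
    simp [smulSwap, hx, hγx, smul_mem_smul_set hx]
  · by_cases hx' : x ∈ γ • C
    · have : γ⁻¹ • x ∈ C := mem_smul_set_iff_inv_smul_mem.1 hx'
      simp [smulSwap, hx, hx', this]
    · simp [smulSwap, hx, hx']

open scoped Classical in
theorem continuous_smulSwap [TopologicalSpace X] [ContinuousConstSMul Γ X] (hC : IsClopen C) :
    Continuous (smulSwap γ C) := by
  have hγC : IsClopen (γ • C) := ⟨hC.isClosed.smul γ, hC.isOpen.smul γ⟩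
  refine Continuous.piecewise (by simp [hC.frontier_eq]) (continuous_const_smul γ) ?_
  exact Continuous.piecewise (by simp [hγC.frontier_eq]) (continuous_const_smul _) continuous_id

theorem exists_smulSwap_eq_smul (x : X) : ∃ δ : Γ, smulSwap γ C x = δ • x := by
  by_cases hx : x ∈ C
  · exact ⟨γ, by simp [smulSwap, hx]⟩
  · by_cases hx' : x ∈ γ • C
    · exact ⟨γ⁻¹, by simp [smulSwap, hx, hx']⟩
    · exact ⟨1, by simp [smulSwap, hx, hx']⟩

theorem eqOn_smulSwap_id : EqOn (smulSwap γ C) id (C ∪ γ • C)ᶜ := by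
  intro x hx
  simp_all [smulSwap]

end Swap

section TopologicalGroup

variable {G ι : Type*} [Group G] [TopologicalSpace G] [ContinuousMul G]

theorem exists_isOpen_of_iUnion_smul_eq_univ [BaireSpace G] [Countable ι] {H : ι → Subgroup G}
    (hH : ∀ i, IsClosed (H i : Set G)) {a : ι → G} (hcover : ⋃ i, a i • (H i : Set G) = univ) :
    ∃ i, IsOpen (H i : Set G) := by
  obtain ⟨i, hi⟩ := nonempty_interior_of_iUnion_of_closed (fun i => (hH i).smul (a i)) hcover
  rw [interior_smul, smul_set_nonempty] at hi
  obtain ⟨h, hh⟩ := hi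
  exact ⟨i, (H i).isOpen_of_mem_nhds (mem_interior_iff_mem_nhds.1 hh)⟩

theorem countable_of_pairwise_inv_mul_notMem [TopologicalSpace.SeparableSpace G] {H : Subgroup G}
    (hH : IsOpen (H : Set G)) {a : ι → G} (ha : Pairwise fun i j => (a i)⁻¹ * a j ∉ H) :
    Countable ι := by
  refine Pairwise.countable_of_isOpen_disjoint (s := fun i => a i • (H : Set G)) ?_
    (fun i => hH.smul (a i)) (fun i => ⟨a i, (mem_leftCoset_iff _).2 (by simp)⟩)
  intro i j hij
  refine disjoint_left.2 fun x hxi hxj => ha hij ?_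
  rw [mem_leftCoset_iff] at hxi hxj
  simpa [mul_assoc] using H.mul_mem hxi (H.inv_mem hxj)

end TopologicalGroup

section Glue

variable {X ι : Type*}

open scoped Classical in
noncomputable def glue (D : ι → Set X) (f : ι → X → X) (x : X) : X :=
  if h : ∃ i, x ∈ D i then f h.choose x else x

variable {D : ι → Set X} {f : ι → X → X} {x : X}

theorem glue_of_mem (hD : Pairwise (Disjoint on D)) {i : ι} (hx : x ∈ D i) :
    glue D f x = f i x := by
  have h : ∃ i, x ∈ D i := ⟨i, hx⟩
  rw [glue, dif_pos h, hD.eq (not_disjoint_iff.2 ⟨x, h.choose_spec, hx⟩)]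

theorem glue_of_forall_notMem (hx : ∀ i, x ∉ D i) : glue D f x = x := by
  rw [glue, dif_neg (not_exists.2 hx)]

theorem leftInverse_glue {g : ι → X → X} (hD : Pairwise (Disjoint on D))
    (hf : ∀ i, f i ⁻¹' D i = D i) (hgf : ∀ i, LeftInverse (g i) (f i)) :
    LeftInverse (glue D g) (glue D f) := by
  intro x
  by_cases hx : ∃ i, x ∈ D i
  · obtain ⟨i, hi⟩ := hx
    have hfi : f i x ∈ D i := (Set.ext_iff.1 (hf i) x).2 hi
    rw [glue_of_mem hD hi, glue_of_mem hD hfi, hgf i x]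
  · push Not at hx
    rw [glue_of_forall_notMem hx, glue_of_forall_notMem hx]

theorem continuous_glue [MetricSpace X] (hD : ∀ i, IsClopen (D i))
    (hdisj : Pairwise (Disjoint on D)) (hf : ∀ i, Continuous (f i))
    (hunif : TendstoUniformly f id cofinite) : Continuous (glue D f) := by
  refine continuous_iff_continuousAt.2 fun x => ?_
  by_cases hx : ∃ i, x ∈ D i
  · obtain ⟨i, hi⟩ := hx
    exact (hf i).continuousAt.congr (eventually_of_mem ((hD i).isOpen.mem_nhds hi)
      fun y hy => (glue_of_mem hdisj hy).symm)
  push Not at hx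
  refine Metric.continuousAt_iff.2 fun ε hε => ?_
  set bad := {i | ¬∀ y, dist (id y) (f i y) < ε / 2}
  have hbad : bad.Finite :=
    eventually_cofinite.1 (Metric.tendstoUniformly_iff.1 hunif _ (half_pos hε))
  have hgood : ∀ y ∉ ⋃ i ∈ bad, D i, dist (glue D f y) y < ε / 2 := by
    intro y hy
    by_cases hyD : ∃ i, y ∈ D i
    · obtain ⟨i, hi⟩ := hyD
      have hi' : i ∉ bad := fun hib => hy (mem_biUnion hib hi)
      rw [glue_of_mem hdisj hi, dist_comm]
      exact not_not.1 hi' y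
    · rw [glue_of_forall_notMem (not_exists.1 hyD), dist_self]
      exact half_pos hε
  have hnhds : (⋃ i ∈ bad, D i)ᶜ ∈ 𝓝 x :=
    (hbad.isClosed_biUnion fun i _ => (hD i).isClosed).isOpen_compl.mem_nhds
      (by simpa using fun i _ => hx i)
  obtain ⟨δ, hδ, hball⟩ := Metric.mem_nhds_iff.1 hnhds
  refine ⟨min δ (ε / 2), lt_min hδ (half_pos hε), fun y hy => ?_⟩
  rw [glue_of_forall_notMem hx]
  calc dist (glue D f y) x ≤ dist (glue D f y) y + dist y x := dist_triangle _ _ _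
    _ < ε / 2 + ε / 2 := add_lt_add (hgood y (hball (lt_of_lt_of_le hy (min_le_left _ _))))
        (lt_of_lt_of_le hy (min_le_right _ _))
    _ = ε := add_halves ε

theorem tendstoUniformly_id_of_eqOn_id_compl {X ι : Type*} [MetricSpace X] {p : Filter ι}
    {D : ι → Set X} {f : ι → X ≃ₜ X} (hf : ∀ i, EqOn (f i) id (D i)ᶜ)
    (hD : ∀ ε > 0, ∀ᶠ i in p, ∀ x ∈ D i, ∀ y ∈ D i, dist x y < ε) :
    TendstoUniformly (fun i => ⇑(f i)) id p := by
  refine Metric.tendstoUniformly_iff.2 fun ε hε => ?_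
  filter_upwards [hD ε hε] with i hi x
  by_cases hx : x ∈ D i
  · have hfx : f i x ∈ D i :=
      (Set.ext_iff.1 (preimage_eq_self_of_eqOn_id_compl (f i).injective (hf i)) x).2 hx
    exact hi x hx _ hfx
  · simpa [hf i hx] using hε

noncomputable def glueHomeomorph [MetricSpace X] (D : ι → Set X) (f : ι → X ≃ₜ X)
    (hD : ∀ i, IsClopen (D i)) (hdisj : Pairwise (Disjoint on D)) (hf : ∀ i, f i ⁻¹' D i = D i)
    (hunif : TendstoUniformly (fun i => ⇑(f i)) id cofinite) : X ≃ₜ X where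
  toFun := glue D fun i => f i
  invFun := glue D fun i => (f i).symm
  left_inv := leftInverse_glue hdisj hf fun i => (f i).symm_apply_apply
  right_inv := leftInverse_glue hdisj
    (fun i => by conv_lhs => rw [← hf i]; exact (f i).toEquiv.symm_preimage_preimage (D i))
    fun i => (f i).apply_symm_apply
  continuous_toFun := continuous_glue hD hdisj (fun i => (f i).continuous) hunif
  continuous_invFun := continuous_glue hD hdisj (fun i => (f i).symm.continuous)
    (Homeomorph.tendstoUniformly_symm_id hunif)

theorem exists_glue_eq_smul {Γ : Type*} [Group Γ] [MulAction Γ X]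
    (hdisj : Pairwise (Disjoint on D)) (hf : ∀ i x, ∃ γ : Γ, f i x = γ • x) (x : X) :
    ∃ γ : Γ, glue D f x = γ • x := by
  by_cases hx : ∃ i, x ∈ D i
  · obtain ⟨i, hi⟩ := hx
    obtain ⟨γ, hγ⟩ := hf i x
    exact ⟨γ, (glue_of_mem hdisj hi).trans hγ⟩
  · exact ⟨1, (glue_of_forall_notMem (not_exists.1 hx)).trans (one_smul Γ x).symm⟩

end Glue

section SmallClopens

variable {X : Type*} [MetricSpace X] [CompactSpace X] [TotallyDisconnectedSpace X] [PerfectSpace X]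

theorem exists_isClopen_subset_diff_nonempty {R : Set X} (hR : IsOpen R) (hne : R.Nonempty)
    {ε : ℝ} (hε : 0 < ε) :
    ∃ D, IsClopen D ∧ D.Nonempty ∧ D ⊆ R ∧ (R \ D).Nonempty ∧ ∀ x ∈ D, ∀ y ∈ D, dist x y < ε := by
  obtain ⟨x, hx⟩ := hne
  obtain ⟨y, ⟨hyR, -⟩, hyx⟩ := preperfect_iff_nhds.1 hR.preperfect x hx R (hR.mem_nhds hx)
  obtain ⟨D, hD, hxD, hDsub⟩ := compact_exists_isClopen_in_isOpen
    ((hR.inter Metric.isOpen_ball).inter isOpen_compl_singleton)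
    ⟨⟨hx, Metric.mem_ball_self (half_pos hε)⟩, hyx.symm⟩
  refine ⟨D, hD, ⟨x, hxD⟩, fun z hz => (hDsub hz).1.1, ⟨y, hyR, fun hy => (hDsub hy).2 rfl⟩,
    fun a ha b hb => ?_⟩
  calc dist a b ≤ dist a x + dist b x := dist_triangle_right a b x
    _ < ε / 2 + ε / 2 := add_lt_add (hDsub ha).1.2 (hDsub hb).1.2
    _ = ε := add_halves ε

theorem exists_seq_isClopen_pairwise_disjoint {B : Set X} (hB : IsOpen B) (hne : B.Nonempty) :
    ∃ D : ℕ → Set X, (∀ n, IsClopen (D n) ∧ (D n).Nonempty ∧ D n ⊆ B) ∧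
      Pairwise (Disjoint on D) ∧ ∀ ε > 0, ∀ᶠ n in atTop, ∀ x ∈ D n, ∀ y ∈ D n, dist x y < ε := by
  choose! E hE using fun (n : ℕ) (R : Set X) (hR : IsOpen R ∧ R.Nonempty) =>
    exists_isClopen_subset_diff_nonempty hR.1 hR.2 (pow_pos one_half_pos n)
  -- `R n` is what is left of `B` after cutting off the pieces `E k (R k)`, `k < n`
  let R : ℕ → Set X := fun n => Nat.rec B (fun n Rn => Rn \ E n Rn) n
  have hR : ∀ n, IsOpen (R n) ∧ (R n).Nonempty := by
    intro n
    induction n with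
    | zero => exact ⟨hB, hne⟩
    | succ n ih => exact ⟨ih.1.sdiff (hE n _ ih).1.isClosed, (hE n _ ih).2.2.2.1⟩
  have hanti : Antitone R := antitone_nat_of_succ_le fun n => sdiff_subset
  refine ⟨fun n => E n (R n), fun n => ⟨(hE n _ (hR n)).1, (hE n _ (hR n)).2.1,
    (hE n _ (hR n)).2.2.1.trans (hanti (Nat.zero_le n))⟩, ?_, fun ε hε => ?_⟩
  · refine (pairwise_disjoint_on _).2 fun m n hmn => ?_
    exact disjoint_sdiff_right.mono_right ((hE n _ (hR n)).2.2.1.trans (hanti hmn))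
  · obtain ⟨N, hN⟩ := exists_pow_lt_of_lt_one hε one_half_lt_one
    filter_upwards [eventually_ge_atTop N] with n hn x hx y hy
    exact ((hE n _ (hR n)).2.2.2.2 x hx y hy).trans_le
      ((pow_le_pow_of_le_one one_half_pos.le one_half_lt_one.le hn).trans hN.le)

end SmallClopens

section FullGroup

variable {X : Type*} [TopologicalSpace X] {Γ : Type*} [Group Γ] [MulAction Γ X]
  [ContinuousConstSMul Γ X]

theorem exists_mem_fullGroup_eqOn_id_compl [T2Space X] [CompactSpace X]
    [TotallyDisconnectedSpace X]
    (hact : ∀ U : Set X, IsOpen U → U.Nonempty → ∃ x ∈ U, ∃ y ∈ U, x ≠ y ∧ ∃ γ : Γ, γ • x = y)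
    {N : Set X} (hN : IsOpen N) (hne : N.Nonempty) :
    ∃ h ∈ fullGroup Γ X, EqOn h id Nᶜ ∧ ∃ u, h u ≠ u := by
  obtain ⟨x, hxN, y, hyN, hxy, γ, rfl⟩ := hact N hN hne
  obtain ⟨O₁, O₂, hO₁, hO₂, hxO₁, hyO₂, hO⟩ := t2_separation hxy
  obtain ⟨C, hC, hxC, hCsub⟩ := compact_exists_isClopen_in_isOpen
    ((hN.inter hO₁).inter ((hN.inter hO₂).preimage (continuous_const_smul γ)))
    ⟨⟨hxN, hxO₁⟩, hyN, hyO₂⟩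
  have hCN : C ∪ γ • C ⊆ N :=
    union_subset (fun c hc => (hCsub hc).1.1) (smul_set_subset_iff.2 fun c hc => (hCsub hc).2.1)
  have hdisj : Disjoint C (γ • C) :=
    hO.mono (fun c hc => (hCsub hc).1.2) (smul_set_subset_iff.2 fun c hc => (hCsub hc).2.2)
  let h : X ≃ₜ X :=
    { toEquiv := (smulSwap_involutive hdisj).toPerm
      continuous_toFun := continuous_smulSwap hC
      continuous_invFun := continuous_smulSwap hC }
  refine ⟨h, exists_smulSwap_eq_smul, eqOn_smulSwap_id.mono (compl_subset_compl.2 hCN), x, ?_⟩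
  show smulSwap γ C x ≠ x
  rw [smulSwap_of_mem hxC]
  exact hxy.symm

theorem coe_fixingSubgroup_subgroupOf_fullGroup [T2Space X] [CompactSpace X]
    [TotallyDisconnectedSpace X]
    (hact : ∀ U : Set X, IsOpen U → U.Nonempty → ∃ x ∈ U, ∃ y ∈ U, x ≠ y ∧ ∃ γ : Γ, γ • x = y)
    {B : Set X} (hB : IsOpen B) :
    ((Homeomorph.fixingSubgroup B).subgroupOf (fullGroup Γ X) : Set (fullGroup Γ X)) =
      centralizer {h : fullGroup Γ X | EqOn (h : X ≃ₜ X) id Bᶜ} := by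
  ext g
  simp only [SetLike.mem_coe, Subgroup.mem_subgroupOf, mem_centralizer_iff, mem_ofPred_eq]
  refine ⟨fun hg h hh => Subtype.ext (Homeomorph.commute_of_eqOn_id hh hg).eq, fun hg x hx => ?_⟩
  by_contra hgx
  obtain ⟨O₁, O₂, hO₁, hO₂, hxO₁, hgxO₂, hO⟩ := t2_separation (Ne.symm hgx)
  obtain ⟨h, hh, hhN, u, hu⟩ := exists_mem_fullGroup_eqOn_id_compl hact
    ((hB.inter hO₁).inter (hO₂.preimage (g : X ≃ₜ X).continuous)) ⟨x, ⟨hx, hxO₁⟩, hgxO₂⟩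
  have huN : u ∈ (B ∩ O₁) ∩ (g : X ≃ₜ X) ⁻¹' O₂ := by
    by_contra huN
    exact hu (hhN huN)
  have hhgu : h ((g : X ≃ₜ X) u) = (g : X ≃ₜ X) u :=
    hhN fun hgu => disjoint_left.1 hO hgu.1.2 huN.2
  have hcomm := congrArg (fun k : fullGroup Γ X => (k : X ≃ₜ X) u)
    (hg ⟨h, hh⟩ (hhN.mono (compl_subset_compl.2 fun _ hy => hy.1.1)))
  exact hu ((g : X ≃ₜ X).injective (hcomm.symm.trans hhgu))

theorem isClosed_fixingSubgroup_subgroupOf_fullGroup [T2Space X] [CompactSpace X]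
    [TotallyDisconnectedSpace X] [TopologicalSpace (fullGroup Γ X)]
    [IsTopologicalGroup (fullGroup Γ X)] [T2Space (fullGroup Γ X)]
    (hact : ∀ U : Set X, IsOpen U → U.Nonempty → ∃ x ∈ U, ∃ y ∈ U, x ≠ y ∧ ∃ γ : Γ, γ • x = y)
    {B : Set X} (hB : IsOpen B) :
    IsClosed ((Homeomorph.fixingSubgroup B).subgroupOf (fullGroup Γ X) : Set (fullGroup Γ X)) := by
  rw [coe_fixingSubgroup_subgroupOf_fullGroup hact hB]
  exact isClosed_centralizer _

theorem exists_nonempty_interior_eqOn_smul [T2Space X] [BaireSpace X] [Nonempty X] [Countable Γ]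
    {g : X ≃ₜ X} (hg : g ∈ fullGroup Γ X) : ∃ γ : Γ, (interior {x | g x = γ • x}).Nonempty :=
  nonempty_interior_of_iUnion_of_closed
    (fun γ => isClosed_eq g.continuous (continuous_const_smul γ))
    (eq_univ_of_forall fun x => mem_iUnion.2 (hg x))

theorem exists_isOpen_fixingSubgroup_subgroupOf_fullGroup [T2Space X] [CompactSpace X]
    [TotallyDisconnectedSpace X] [SecondCountableTopology X] [Nonempty X] [Countable Γ]
    [TopologicalSpace (fullGroup Γ X)] [IsTopologicalGroup (fullGroup Γ X)]
    [T2Space (fullGroup Γ X)] [BaireSpace (fullGroup Γ X)]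
    (hact : ∀ U : Set X, IsOpen U → U.Nonempty → ∃ x ∈ U, ∃ y ∈ U, x ≠ y ∧ ∃ γ : Γ, γ • x = y) :
    ∃ B : Set X, IsOpen B ∧ B.Nonempty ∧
      IsOpen ((Homeomorph.fixingSubgroup B).subgroupOf (fullGroup Γ X) : Set (fullGroup Γ X)) := by
  obtain ⟨bas, hcount, hempty, hbasis⟩ := TopologicalSpace.exists_countable_basis X
  have := hcount.to_subtype
  have hcoset (i : bas × Γ) : ∃ a : fullGroup Γ X,
      {g : fullGroup Γ X | EqOn (g : X ≃ₜ X) (i.2 • ·) i.1} ⊆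
        a • ((Homeomorph.fixingSubgroup i.1.1).subgroupOf (fullGroup Γ X) : Set _) := by
    by_cases h : ∃ a : fullGroup Γ X, EqOn (a : X ≃ₜ X) (i.2 • ·) i.1
    · obtain ⟨a, ha⟩ := h
      exact ⟨a, fun b hb => (mem_leftCoset_iff a).2 (Subgroup.mem_subgroupOf.2
        (Homeomorph.inv_mul_mem_fixingSubgroup.2 (ha.trans hb.symm)))⟩
    · exact ⟨1, fun b hb => (h ⟨b, hb⟩).elim⟩
  choose a ha using hcoset
  have hcover : ⋃ i, a i • ((Homeomorph.fixingSubgroup i.1.1).subgroupOf (fullGroup Γ X) :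
      Set (fullGroup Γ X)) = univ := by
    refine eq_univ_of_forall fun g => ?_
    obtain ⟨γ, x, hx⟩ := exists_nonempty_interior_eqOn_smul g.2
    obtain ⟨B, hB, -, hBsub⟩ := hbasis.exists_subset_of_mem_open hx isOpen_interior
    exact mem_iUnion.2 ⟨(⟨B, hB⟩, γ), ha _ fun y hy =>
      interior_subset (s := {x | (g : X ≃ₜ X) x = γ • x}) (hBsub hy)⟩
  obtain ⟨⟨⟨B, hB⟩, γ⟩, hopen⟩ := exists_isOpen_of_iUnion_smul_eq_univ
    (fun i => isClosed_fixingSubgroup_subgroupOf_fullGroup hact (hbasis.isOpen i.1.2)) hcover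
  exact ⟨B, hbasis.isOpen hB, nonempty_iff_ne_empty.2 fun h => hempty (h ▸ hB), hopen⟩

end FullGroup

theorem exists_pairwise_inv_mul_notMem_fixingSubgroup {X : Type*} [MetricSpace X]
    [CompactSpace X] [TotallyDisconnectedSpace X] [PerfectSpace X] {Γ : Type*} [Group Γ]
    [MulAction Γ X] [ContinuousConstSMul Γ X]
    (hact : ∀ U : Set X, IsOpen U → U.Nonempty → ∃ x ∈ U, ∃ y ∈ U, x ≠ y ∧ ∃ γ : Γ, γ • x = y)
    {B : Set X} (hB : IsOpen B) (hne : B.Nonempty) :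
    ∃ g : Set ℕ → fullGroup Γ X, Pairwise fun S T =>
      (g S)⁻¹ * g T ∉ (Homeomorph.fixingSubgroup B).subgroupOf (fullGroup Γ X) := by
  obtain ⟨D, hD, hdisj, hsmall⟩ := exists_seq_isClopen_pairwise_disjoint hB hne
  choose h hmem hsupp u hu using fun n =>
    exists_mem_fullGroup_eqOn_id_compl hact (hD n).1.isOpen (hD n).2.1
  have hinv n : h n ⁻¹' D n = D n := preimage_eq_self_of_eqOn_id_compl (h n).injective (hsupp n)
  have huD n : u n ∈ D n := by
    by_contra hun
    exact hu n (hsupp n hun)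
  have hunif : TendstoUniformly (fun n => ⇑(h n)) id cofinite :=
    Nat.cofinite_eq_atTop ▸ tendstoUniformly_id_of_eqOn_id_compl hsupp hsmall
  let g (S : Set ℕ) : X ≃ₜ X := glueHomeomorph (fun n : S => D n) (fun n => h n)
    (fun n => (hD n).1) (hdisj.comp_of_injective Subtype.val_injective) (fun n => hinv n)
    fun V hV => Subtype.val_injective.tendsto_cofinite.eventually (hunif V hV)
  have hgu (S : Set ℕ) (n : ℕ) : g S (u n) = u n ↔ n ∉ S := by
    show glue _ (fun n : S => ⇑(h n)) (u n) = u n ↔ n ∉ S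
    by_cases hn : n ∈ S
    · simp only [hn, not_true_eq_false, iff_false]
      exact (glue_of_mem (i := ⟨n, hn⟩) (hdisj.comp_of_injective Subtype.val_injective)
        (huD n)).trans_ne (hu n)
    · refine iff_of_true (glue_of_forall_notMem fun m hm => ?_) hn
      exact disjoint_left.1 (hdisj (show m.1 ≠ n from fun hmn => hn (hmn ▸ m.2))) hm (huD n)
  refine ⟨fun S => ⟨g S, exists_glue_eq_smul (f := fun n : S => ⇑(h n))
    (hdisj.comp_of_injective Subtype.val_injective) fun n => hmem n⟩, fun S T hST hgST => ?_⟩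
  rw [Subgroup.mem_subgroupOf, Subgroup.coe_mul, Subgroup.coe_inv,
    Homeomorph.inv_mul_mem_fixingSubgroup] at hgST
  obtain ⟨n, hn⟩ : ∃ n, ¬(n ∈ S ↔ n ∈ T) := by
    by_contra! h
    exact hST (Set.ext h)
  refine hn (not_iff_not.1 ?_)
  rw [← hgu S n, ← hgu T n, hgST ((hD n).2.2 (huD n))]

/-- Theorem: there is no second countable, Hausdorff, Baire group topology on the
full group of such an action. -/
theorem no_second_countable_hausdorff_baire_group_topology {X : Type*} [TopologicalSpace X] [Nonempty X] [CompactSpace X]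
    [TopologicalSpace.MetrizableSpace X] [TotallyDisconnectedSpace X] [PerfectSpace X]
    (Γ : Type*) [Group Γ] [Countable Γ] [MulAction Γ X] [ContinuousConstSMul Γ X]
    (hact : ∀ U : Set X, IsOpen U → U.Nonempty →
      ∃ x ∈ U, ∃ y ∈ U, x ≠ y ∧ ∃ γ : Γ, γ • x = y) :
    ¬ ∃ τ : TopologicalSpace ↥(fullGroup Γ X),
      @IsTopologicalGroup ↥(fullGroup Γ X) τ _ ∧ @T2Space ↥(fullGroup Γ X) τ ∧
      @SecondCountableTopology ↥(fullGroup Γ X) τ ∧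
      @BaireSpace ↥(fullGroup Γ X) τ := by
  rintro ⟨τ, _, _, _, _⟩
  let := TopologicalSpace.metrizableSpaceMetric X
  obtain ⟨B, hB, hne, hopen⟩ := exists_isOpen_fixingSubgroup_subgroupOf_fullGroup hact
  obtain ⟨g, hg⟩ := exists_pairwise_inv_mul_notMem_fixingSubgroup hact hB hne
  have := countable_of_pairwise_inv_mul_notMem hopen hg
  obtain ⟨f, hf⟩ := Countable.exists_injective_nat (Set ℕ)
  exact Function.cantor_injective f hf
end

section
/- Let Γ be a countable group acting by homeomorphisms on a Cantor space X such that for every nonempty open set U ⊆ X there exist distinct points x, y ∈ U and γ ∈ Γ with γ·x = y, let [R] be the full group of the action, and let Ω = {x ∈ X : x is an accumulation point of Γ·x}. Then for every countable subset {x_i : i ∈ ℕ} of Ω and every x ∈ Ω not belonging to {x_i : i ∈ ℕ}, there exists g ∈ [R] such that g(x) = x and g(x_i) ≠ x_i for all i. -/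
open Set

/-!
Enumerate the points `xi n` and greedily choose, for each one not already covered, a small
clopen set `A n ∋ xi n` and `γ n ∈ Γ` with `A n` and `γ n • A n` disjoint: since `xi n`
accumulates along its own orbit, some `γ n • xi n` lies close to, but away from, `xi n`.
The supports `A n ∪ γ n • A n` are chosen pairwise disjoint, avoiding `x`, and shrinking to
points. The map acting as `γ n` on `A n`, as `(γ n)⁻¹` on `γ n • A n` and as the identity
elsewhere is then an involution in the full group; it is continuous off the supports because
only small supports come close to such a point. It fixes `x` and moves every point of every
support, in particular every `xi n`.
-/

open Function Pointwise Filter Topology Metric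

theorem exists_seq_pairwise_disjoint_of_step {α β : Type*} (supp : β → Set α)
    (good : Set α → Prop) (P : ℕ → Set α → β → Prop) (h_empty : good ∅)
    (step : ∀ n C, good C → ∃ b, Disjoint (supp b) C ∧ good (C ∪ supp b) ∧ P n C b) :
    ∃ b : ℕ → β, Pairwise (Disjoint on fun n => supp (b n)) ∧
      ∀ n, P n (⋃ m < n, supp (b m)) (b n) := by
  choose next h_disj h_good hP using fun n (C : {C // good C}) => step n C C.2
  let D : ℕ → {C // good C} :=
    fun n => Nat.rec ⟨∅, h_empty⟩ (fun m C => ⟨C.1 ∪ supp (next m C), h_good m C⟩) n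
  have hD : ∀ n, (D n).1 = ⋃ m < n, supp (next m (D m)) := fun n => by
    induction n with
    | zero => simp [D]
    | succ n ih => rw [biUnion_lt_succ, ← ih]
  refine ⟨fun n => next n (D n), ?_, fun n => hD n ▸ hP n (D n)⟩
  refine (pairwise_disjoint_on _).2 fun m n hmn => ((h_disj n (D n)).mono_right ?_).symm
  rw [hD n]
  exact subset_iUnion₂ (s := fun k (_ : k < n) => supp (next k (D k))) m hmn

section SwapAll

variable {Γ X : Type*} [Group Γ] [MulAction Γ X] {A : ℕ → Set X} {γ : ℕ → Γ}

variable (A γ) in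
def swapSupport (n : ℕ) : Set X := A n ∪ γ n • A n

open scoped Classical in
variable (A γ) in
noncomputable def swapAll (z : X) : X :=
  if h : ∃ n, z ∈ A n then γ h.choose • z
  else if h : ∃ n, z ∈ γ n • A n then (γ h.choose)⁻¹ • z else z

variable (A γ) in
structure IsDisjointSwapFamily : Prop where
  disjoint_smul : ∀ n, Disjoint (A n) (γ n • A n)
  pairwise_disjoint : Pairwise (Disjoint on swapSupport A γ)

theorem swapAll_mem_orbit (z : X) : ∃ δ : Γ, swapAll A γ z = δ • z := by
  unfold swapAll
  split_ifs
  exacts [⟨_, rfl⟩, ⟨_, rfl⟩, ⟨1, (one_smul Γ z).symm⟩]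

theorem swapAll_of_forall_notMem {z : X} (hz : ∀ n, z ∉ swapSupport A γ n) :
    swapAll A γ z = z := by
  have hA : ¬∃ n, z ∈ A n := fun ⟨n, hn⟩ => hz n (Or.inl hn)
  have hγA : ¬∃ n, z ∈ γ n • A n := fun ⟨n, hn⟩ => hz n (Or.inr hn)
  simp only [swapAll, dif_neg hA, dif_neg hγA]

namespace IsDisjointSwapFamily

variable {z : X} {n : ℕ}

theorem eq_of_mem_swapSupport (h : IsDisjointSwapFamily A γ) {m : ℕ}
    (hm : z ∈ swapSupport A γ m) (hn : z ∈ swapSupport A γ n) : m = n :=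
  h.pairwise_disjoint.eq (not_disjoint_iff.2 ⟨z, hm, hn⟩)

theorem swapAll_of_mem (h : IsDisjointSwapFamily A γ) (hz : z ∈ A n) :
    swapAll A γ z = γ n • z := by
  have hex : ∃ m, z ∈ A m := ⟨n, hz⟩
  rw [swapAll, dif_pos hex, h.eq_of_mem_swapSupport (Or.inl hex.choose_spec) (Or.inl hz)]

theorem swapAll_of_mem_smul (h : IsDisjointSwapFamily A γ) (hz : z ∈ γ n • A n) :
    swapAll A γ z = (γ n)⁻¹ • z := by
  have hA : ¬∃ m, z ∈ A m := by
    rintro ⟨m, hm⟩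
    obtain rfl := h.eq_of_mem_swapSupport (Or.inl hm) (Or.inr hz)
    exact disjoint_left.1 (h.disjoint_smul m) hm hz
  have hex : ∃ m, z ∈ γ m • A m := ⟨n, hz⟩
  rw [swapAll, dif_neg hA, dif_pos hex,
    h.eq_of_mem_swapSupport (Or.inr hex.choose_spec) (Or.inr hz)]

theorem swapAll_mem_smul_of_mem (h : IsDisjointSwapFamily A γ) (hz : z ∈ A n) :
    swapAll A γ z ∈ γ n • A n := by
  rw [h.swapAll_of_mem hz]
  exact smul_mem_smul_set hz

theorem swapAll_mem_of_mem_smul (h : IsDisjointSwapFamily A γ) (hz : z ∈ γ n • A n) :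
    swapAll A γ z ∈ A n := by
  rw [h.swapAll_of_mem_smul hz]
  exact mem_smul_set_iff_inv_smul_mem.1 hz

theorem swapAll_mem_swapSupport (h : IsDisjointSwapFamily A γ) (hz : z ∈ swapSupport A γ n) :
    swapAll A γ z ∈ swapSupport A γ n :=
  hz.elim (fun hz => Or.inr (h.swapAll_mem_smul_of_mem hz))
    (fun hz => Or.inl (h.swapAll_mem_of_mem_smul hz))

theorem swapAll_ne_self (h : IsDisjointSwapFamily A γ) (hz : z ∈ swapSupport A γ n) :
    swapAll A γ z ≠ z := by
  intro hfix
  rcases hz with hz | hz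
  · exact disjoint_left.1 (h.disjoint_smul n) hz (hfix ▸ h.swapAll_mem_smul_of_mem hz)
  · exact disjoint_left.1 (h.disjoint_smul n) (hfix ▸ h.swapAll_mem_of_mem_smul hz) hz

theorem swapAll_involutive (h : IsDisjointSwapFamily A γ) :
    Involutive (swapAll A γ) := by
  intro z
  by_cases hz : ∃ n, z ∈ swapSupport A γ n
  · obtain ⟨n, hz | hz⟩ := hz
    · rw [h.swapAll_of_mem_smul (h.swapAll_mem_smul_of_mem hz), h.swapAll_of_mem hz,
        inv_smul_smul]
    · rw [h.swapAll_of_mem (h.swapAll_mem_of_mem_smul hz), h.swapAll_of_mem_smul hz,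
        smul_inv_smul]
  · push Not at hz
    rw [swapAll_of_forall_notMem hz, swapAll_of_forall_notMem hz]

variable [MetricSpace X] [ContinuousConstSMul Γ X]

theorem continuousAt_swapAll_of_mem (h : IsDisjointSwapFamily A γ) (hA : ∀ n, IsOpen (A n))
    (hz : z ∈ swapSupport A γ n) : ContinuousAt (swapAll A γ) z := by
  rcases hz with hz | hz
  · exact (continuous_const_smul (γ n)).continuousAt.congr <|
      eventually_of_mem ((hA n).mem_nhds hz) fun w hw => (h.swapAll_of_mem hw).symm
  · exact (continuous_const_smul (γ n)⁻¹).continuousAt.congr <|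
      eventually_of_mem (((hA n).smul (γ n)).mem_nhds hz) fun w hw =>
        (h.swapAll_of_mem_smul hw).symm

theorem continuousAt_swapAll_of_forall_notMem (h : IsDisjointSwapFamily A γ)
    (hA : ∀ n, IsClosed (A n)) {c : ℕ → X} {r : ℕ → ℝ} (hr : Tendsto r atTop (𝓝 0))
    (hsub : ∀ n, swapSupport A γ n ⊆ ball (c n) (r n)) (hz : ∀ n, z ∉ swapSupport A γ n) :
    ContinuousAt (swapAll A γ) z := by
  rw [ContinuousAt, swapAll_of_forall_notMem hz, Metric.tendsto_nhds]
  intro ε hε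
  obtain ⟨N, hN⟩ := eventually_atTop.1 (hr.eventually (gt_mem_nhds (by positivity : 0 < ε / 4)))
  have hclosed : IsClosed (⋃ n ∈ {n | n < N}, swapSupport A γ n) :=
    (finite_lt_nat N).isClosed_biUnion fun n _ => (hA n).union ((hA n).smul (γ n))
  have hfar : ∀ᶠ w in 𝓝 z, w ∉ ⋃ n ∈ {n | n < N}, swapSupport A γ n :=
    hclosed.isOpen_compl.mem_nhds (by simpa using fun n _ => hz n)
  filter_upwards [hfar, ball_mem_nhds z (half_pos hε)] with w hw hwz
  rw [mem_ball] at hwz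
  by_cases hw' : ∃ n, w ∈ swapSupport A γ n
  · obtain ⟨n, hn⟩ := hw'
    have hNn : N ≤ n := not_lt.1 fun hlt => hw (mem_biUnion hlt hn)
    have h₁ := mem_ball.1 (hsub n (h.swapAll_mem_swapSupport hn))
    have h₂ := mem_ball'.1 (hsub n hn)
    calc dist (swapAll A γ w) z
        ≤ dist (swapAll A γ w) (c n) + dist (c n) w + dist w z := dist_triangle4 _ _ _ _
      _ < ε := by linarith [hN n hNn]
  · push Not at hw'
    rw [swapAll_of_forall_notMem hw']
    linarith

theorem continuous_swapAll (h : IsDisjointSwapFamily A γ) (hA : ∀ n, IsClopen (A n))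
    {c : ℕ → X} {r : ℕ → ℝ} (hr : Tendsto r atTop (𝓝 0))
    (hsub : ∀ n, swapSupport A γ n ⊆ ball (c n) (r n)) : Continuous (swapAll A γ) := by
  refine continuous_iff_continuousAt.2 fun z => ?_
  by_cases hz : ∃ n, z ∈ swapSupport A γ n
  · obtain ⟨n, hn⟩ := hz
    exact h.continuousAt_swapAll_of_mem (fun n => (hA n).isOpen) hn
  · push Not at hz
    exact h.continuousAt_swapAll_of_forall_notMem (fun n => (hA n).isClosed) hr hsub hz

end IsDisjointSwapFamily

end SwapAll

theorem exists_mem_fullGroup_of_involutive {Γ X : Type*} [Group Γ] [TopologicalSpace X]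
    [MulAction Γ X] {f : X → X} (hf : Involutive f) (hc : Continuous f)
    (horb : ∀ z, ∃ δ : Γ, f z = δ • z) : ∃ g ∈ fullGroup Γ X, ⇑g = f :=
  ⟨{ toEquiv := hf.toPerm f, continuous_toFun := hc, continuous_invFun := hc }, horb, rfl⟩

theorem exists_isClopen_disjoint_smul_subset {Γ X : Type*} [Group Γ] [TopologicalSpace X]
    [T2Space X] [CompactSpace X] [TotallyDisconnectedSpace X] [MulAction Γ X]
    [ContinuousConstSMul Γ X] {y : X} (hy : y ∈ closure (MulAction.orbit Γ y \ {y}))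
    {U : Set X} (hU : IsOpen U) (hyU : y ∈ U) :
    ∃ (A : Set X) (γ : Γ), IsClopen A ∧ y ∈ A ∧ Disjoint A (γ • A) ∧ A ∪ γ • A ⊆ U := by
  obtain ⟨_, hγyU, ⟨γ, rfl⟩, hγy⟩ := mem_closure_iff.1 hy U hU hyU
  obtain ⟨W, hW, hγyW, hWU⟩ :=
    compact_exists_isClopen_in_isOpen (hU.inter isOpen_compl_singleton) ⟨hγyU, hγy⟩
  obtain ⟨A, hA, hyA, hAV⟩ := compact_exists_isClopen_in_isOpen
    (((hW.isOpen.preimage (continuous_const_smul γ)).inter hU).inter hW.isClosed.isOpen_compl)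
    ⟨⟨hγyW, hyU⟩, fun hyW => (hWU hyW).2 rfl⟩
  have hγA : γ • A ⊆ W := smul_set_subset_iff.2 fun a ha => (hAV ha).1.1
  have hAW : Disjoint A W := subset_compl_iff_disjoint_right.1 fun a ha => (hAV ha).2
  exact ⟨A, γ, hA, hyA, hAW.mono_right hγA,
    union_subset (fun a ha => (hAV ha).1.2) (hγA.trans fun w hw => (hWU hw).1)⟩

theorem exists_swapPair_avoiding {Γ X : Type*} [Group Γ] [MetricSpace X] [CompactSpace X]
    [TotallyDisconnectedSpace X] [MulAction Γ X] [ContinuousConstSMul Γ X] {x y : X}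
    (hy : y ∈ closure (MulAction.orbit Γ y \ {y})) (hxy : x ≠ y) {C : Set X} (hC : IsClosed C)
    {r : ℝ} (hr : 0 < r) :
    ∃ (A : Set X) (γ : Γ), Disjoint (A ∪ γ • A) C ∧ IsClopen A ∧ Disjoint A (γ • A) ∧
      A ∪ γ • A ⊆ ball y r ∧ x ∉ A ∪ γ • A ∧ y ∈ C ∪ (A ∪ γ • A) := by
  by_cases hyC : y ∈ C
  · exact ⟨∅, 1, by simp, isClopen_empty, by simp, by simp, by simp, Or.inl hyC⟩
  obtain ⟨A, γ, hA, hyA, hAγ, hAU⟩ := exists_isClopen_disjoint_smul_subset hy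
    ((isOpen_ball.inter hC.isOpen_compl).inter isOpen_compl_singleton)
    ⟨⟨mem_ball_self hr, hyC⟩, hxy.symm⟩
  exact ⟨A, γ, subset_compl_iff_disjoint_right.1 fun z hz => (hAU hz).1.2, hA, hAγ,
    fun z hz => (hAU hz).1.1, fun hx => (hAU hx).2 rfl, Or.inr (Or.inl hyA)⟩

theorem exists_isDisjointSwapFamily_covering {Γ X : Type*} [Group Γ] [MetricSpace X]
    [CompactSpace X] [TotallyDisconnectedSpace X] [MulAction Γ X] [ContinuousConstSMul Γ X]
    {x : X} {y : ℕ → X} (hy : ∀ n, y n ∈ closure (MulAction.orbit Γ (y n) \ {y n}))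
    (hxy : ∀ n, x ≠ y n) :
    ∃ (A : ℕ → Set X) (γ : ℕ → Γ), IsDisjointSwapFamily A γ ∧ (∀ n, IsClopen (A n)) ∧
      (∀ n, swapSupport A γ n ⊆ ball (y n) (1 / (n + 1))) ∧ (∀ n, x ∉ swapSupport A γ n) ∧
      ∀ n, ∃ m, y n ∈ swapSupport A γ m := by
  let supp : Set X × Γ → Set X := fun p => p.1 ∪ p.2 • p.1
  obtain ⟨p, hp_disj, hp⟩ := exists_seq_pairwise_disjoint_of_step supp IsClosed
    (fun n C p => IsClopen p.1 ∧ Disjoint p.1 (p.2 • p.1) ∧ supp p ⊆ ball (y n) (1 / (n + 1)) ∧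
      x ∉ supp p ∧ y n ∈ C ∪ supp p) isClosed_empty fun n C hC => by
    obtain ⟨A, γ, hAC, hA, hpair⟩ :=
      exists_swapPair_avoiding (hy n) (hxy n) hC (Nat.one_div_pos_of_nat (α := ℝ))
    exact ⟨(A, γ), hAC, hC.union (hA.isClosed.union (hA.isClosed.smul γ)), hA, hpair⟩
  refine ⟨fun n => (p n).1, fun n => (p n).2, ⟨fun n => (hp n).2.1, hp_disj⟩,
    fun n => (hp n).1, fun n => (hp n).2.2.1, fun n => (hp n).2.2.2.1, fun n => ?_⟩
  obtain hC | hn := (hp n).2.2.2.2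
  · obtain ⟨m, -, hm⟩ := mem_iUnion₂.1 hC
    exact ⟨m, hm⟩
  · exact ⟨n, hn⟩

theorem exists_fixing_and_moving_general {X : Type*} [TopologicalSpace X] [CompactSpace X]
    [TopologicalSpace.MetrizableSpace X] [TotallyDisconnectedSpace X]
    (Γ : Type*) [Group Γ] [MulAction Γ X] [ContinuousConstSMul Γ X]
    (x : X) (xi : ℕ → X)
    (hxi : ∀ i : ℕ, xi i ∈ closure (MulAction.orbit Γ (xi i) \ {xi i}))
    (hne : ∀ i : ℕ, x ≠ xi i) :
    ∃ g ∈ fullGroup Γ X, (g : X ≃ₜ X) x = x ∧ ∀ i : ℕ, (g : X ≃ₜ X) (xi i) ≠ xi i := by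
  let : MetricSpace X := TopologicalSpace.metrizableSpaceMetric X
  obtain ⟨A, γ, hfam, hA, hsmall, hx, hcover⟩ := exists_isDisjointSwapFamily_covering hxi hne
  obtain ⟨g, hg, hg_eq⟩ := exists_mem_fullGroup_of_involutive hfam.swapAll_involutive
    (hfam.continuous_swapAll hA tendsto_one_div_add_atTop_nhds_zero_nat hsmall) swapAll_mem_orbit
  refine ⟨g, hg, hg_eq ▸ swapAll_of_forall_notMem hx, fun i => ?_⟩
  obtain ⟨n, hn⟩ := hcover i
  exact hg_eq ▸ hfam.swapAll_ne_self hn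

/-- Claim in the proof of the main theorem of Section 3: given countably many points
`x_i` of `Ω` (the set of accumulation points of their own orbits) and `x ∈ Ω` distinct
from all `x_i`, there is an element of the full group fixing `x` and moving every
`x_i`. -/
theorem exists_fixing_and_moving {X : Type*} [TopologicalSpace X] [Nonempty X] [CompactSpace X]
    [TopologicalSpace.MetrizableSpace X] [TotallyDisconnectedSpace X] [PerfectSpace X]
    (Γ : Type*) [Group Γ] [Countable Γ] [MulAction Γ X] [ContinuousConstSMul Γ X]
    (hact : ∀ U : Set X, IsOpen U → U.Nonempty →
      ∃ x ∈ U, ∃ y ∈ U, x ≠ y ∧ ∃ γ : Γ, γ • x = y)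
    (x : X) (xi : ℕ → X)
    (hxi : ∀ i : ℕ, xi i ∈ closure (MulAction.orbit Γ (xi i) \ {xi i}))
    (hx : x ∈ closure (MulAction.orbit Γ x \ {x}))
    (hne : ∀ i : ℕ, x ≠ xi i) :
    ∃ g ∈ fullGroup Γ X, (g : X ≃ₜ X) x = x ∧ ∀ i : ℕ, (g : X ≃ₜ X) (xi i) ≠ xi i :=
  exists_fixing_and_moving_general Γ x xi hxi hne
end

section
/- Let Γ be a countable group acting by homeomorphisms on a Cantor space X. Then the full group [R_Γ] is a coanalytic subset of the Polish group Homeo(X); that is, the complement of [R_Γ] in Homeo(X) is an analytic set. -/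
open Set

section HomeoTopSetup

variable {X : Type*} [TopologicalSpace X]

/-- The topology on the homeomorphism group of `X`: the one induced by the embedding
`g ↦ (g, g⁻¹)` into `C(X, X) × C(X, X)`, where `C(X, X)` carries the compact-open
topology.  For a compact metrizable `X`, this is the usual Polish group topology on
`Homeo(X)`. -/
noncomputable instance : TopologicalSpace (X ≃ₜ X) :=
  TopologicalSpace.induced
    (fun g : X ≃ₜ X => ((g : C(X, X)), (g.symm : C(X, X)))) inferInstance

lemma Homeomorph.continuous_pair :
    Continuous fun g : X ≃ₜ X => ((g : C(X, X)), (g.symm : C(X, X))) :=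
  continuous_induced_dom

lemma Homeomorph.continuous_coe' : Continuous fun g : X ≃ₜ X => (g : C(X, X)) := by
  exact Continuous.fst Homeomorph.continuous_pair

lemma Homeomorph.continuous_coe_symm' :
    Continuous fun g : X ≃ₜ X => (g.symm : C(X, X)) := by
  exact Continuous.snd Homeomorph.continuous_pair

variable [CompactSpace X] [TopologicalSpace.MetrizableSpace X]

instance : IsTopologicalGroup (X ≃ₜ X) where
  continuous_mul := by
    apply continuous_induced_rng.2
    show Continuous fun p : (X ≃ₜ X) × (X ≃ₜ X) =>
      (((p.1 * p.2 : X ≃ₜ X) : C(X, X)), (((p.1 * p.2 : X ≃ₜ X)).symm : C(X, X)))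
    apply Continuous.prodMk
    · have h : Continuous fun p : C(X, X) × C(X, X) => p.2.comp p.1 :=
        ContinuousMap.continuous_comp'
      exact h.comp ((Homeomorph.continuous_coe'.comp continuous_snd).prodMk
        (Homeomorph.continuous_coe'.comp continuous_fst))
    · have h : Continuous fun p : C(X, X) × C(X, X) => p.2.comp p.1 :=
        ContinuousMap.continuous_comp'
      exact h.comp ((Homeomorph.continuous_coe_symm'.comp continuous_fst).prodMk
        (Homeomorph.continuous_coe_symm'.comp continuous_snd))
  continuous_inv := by
    apply continuous_induced_rng.2
    show Continuous fun g : X ≃ₜ X =>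
      (((g⁻¹ : X ≃ₜ X) : C(X, X)), ((g⁻¹ : X ≃ₜ X).symm : C(X, X)))
    exact Homeomorph.continuous_coe_symm'.prodMk Homeomorph.continuous_coe'

end HomeoTopSetup


/-!
`[R_Γ]ᶜ` is the projection to `Homeo(X)` of the set of pairs `(g, x)` with `g x` outside the
orbit `Γ • x`. That set is the countable intersection of the open sets `{(g, x) | g x ≠ γ • x}`,
hence Borel in the Polish space `Homeo(X) × X`, and projections of Borel sets are analytic.
-/

namespace Homeomorph

variable {X : Type*} [TopologicalSpace X]

lemma range_pair :
    range (fun g : X ≃ₜ X => ((g : C(X, X)), (g.symm : C(X, X)))) =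
      {p | p.1.comp p.2 = ContinuousMap.id X ∧ p.2.comp p.1 = ContinuousMap.id X} := by
  ext p
  constructor
  · rintro ⟨g, rfl⟩
    exact ⟨ContinuousMap.ext g.apply_symm_apply, ContinuousMap.ext g.symm_apply_apply⟩
  · rintro ⟨h₁, h₂⟩
    refine ⟨⟨⟨p.1, p.2, ContinuousMap.congr_fun h₂, ContinuousMap.congr_fun h₁⟩,
      p.1.continuous, p.2.continuous⟩, rfl⟩

lemma isClosedEmbedding_pair [T2Space X] [LocallyCompactSpace X] :
    Topology.IsClosedEmbedding fun g : X ≃ₜ X => ((g : C(X, X)), (g.symm : C(X, X))) := by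
  refine ⟨⟨⟨rfl⟩, fun g g' h => Homeomorph.ext (ContinuousMap.congr_fun (congrArg Prod.fst h))⟩,
    ?_⟩
  have hcomp : Continuous fun p : C(X, X) × C(X, X) => p.1.comp p.2 :=
    ContinuousMap.continuous_comp'.comp continuous_swap
  rw [range_pair]
  exact (isClosed_singleton.preimage hcomp).inter
    (isClosed_singleton.preimage ContinuousMap.continuous_comp')

instance polishSpace [CompactSpace X] [TopologicalSpace.MetrizableSpace X] :
    PolishSpace (X ≃ₜ X) :=
  letI := TopologicalSpace.metrizableSpaceMetric X
  isClosedEmbedding_pair.polishSpace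

lemma continuous_eval' [LocallyCompactSpace X] :
    Continuous fun p : (X ≃ₜ X) × X => p.1 p.2 :=
  (ContinuousEval.continuous_eval (F := C(X, X))).comp (continuous_coe'.prodMap continuous_id)

end Homeomorph

section FullGroup

variable (Γ X : Type*) [Group Γ] [TopologicalSpace X] [MulAction Γ X]

def offOrbitPairs : Set ((X ≃ₜ X) × X) := {p | ∀ γ : Γ, p.1 p.2 ≠ γ • p.2}

lemma compl_fullGroup_eq_image_fst :
    ((fullGroup Γ X : Set (X ≃ₜ X)))ᶜ = Prod.fst '' offOrbitPairs Γ X := by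
  ext g
  simp only [SetLike.mem_coe, mem_compl_iff, mem_image, Prod.exists, exists_and_right,
    exists_eq_right, offOrbitPairs, mem_ofPred_eq]
  show (¬ ∀ x : X, ∃ γ : Γ, g x = γ • x) ↔ _
  push Not
  rfl

lemma measurableSet_offOrbitPairs [Countable Γ] [ContinuousConstSMul Γ X] [T2Space X]
    [LocallyCompactSpace X] [MeasurableSpace ((X ≃ₜ X) × X)]
    [OpensMeasurableSpace ((X ≃ₜ X) × X)] :
    MeasurableSet (offOrbitPairs Γ X) := by
  have hopen (γ : Γ) : IsOpen {p : (X ≃ₜ X) × X | p.1 p.2 ≠ γ • p.2} :=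
    isOpen_ne_fun Homeomorph.continuous_eval' ((continuous_const_smul γ).comp continuous_snd)
  simpa only [offOrbitPairs, ofPred_forall] using
    MeasurableSet.iInter fun γ => (hopen γ).measurableSet

end FullGroup

theorem fullGroup_coanalytic_general {X : Type*} [TopologicalSpace X] [CompactSpace X]
    [TopologicalSpace.MetrizableSpace X]
    (Γ : Type*) [Group Γ] [Countable Γ] [MulAction Γ X] [ContinuousConstSMul Γ X] :
    MeasureTheory.AnalyticSet ((fullGroup Γ X : Set (X ≃ₜ X))ᶜ) := by
  let := TopologicalSpace.metrizableSpaceMetric X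
  borelize ((X ≃ₜ X) × X)
  rw [compl_fullGroup_eq_image_fst]
  exact (measurableSet_offOrbitPairs Γ X).analyticSet.image_of_continuous continuous_fst

/-- The full group of an action of a countable group by homeomorphisms on a Cantor space
is a coanalytic subset of `Homeo(X)`: its complement is analytic. -/
theorem fullGroup_coanalytic {X : Type*} [TopologicalSpace X] [Nonempty X] [CompactSpace X]
    [TopologicalSpace.MetrizableSpace X] [TotallyDisconnectedSpace X] [PerfectSpace X]
    (Γ : Type*) [Group Γ] [Countable Γ] [MulAction Γ X] [ContinuousConstSMul Γ X] :
    MeasureTheory.AnalyticSet ((fullGroup Γ X : Set (X ≃ₜ X))ᶜ) :=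
  fullGroup_coanalytic_general Γ
end

section
/- Let φ be a minimal homeomorphism of a Cantor space X. For g ∈ Homeo(X), define the tree T_g on the set of clopen subsets of X by: a finite sequence (U_0, …, U_n) of clopen sets belongs to T_g if and only if each U_j is nonempty, U_{j+1} ⊆ U_j for all j ∈ {0,…,n−1}, and for all j ∈ {0,…,n} and all x ∈ U_j one has g(x) ≠ φ^j(x) and g(x) ≠ φ^{−j}(x). Then g belongs to the full group [φ] if and only if T_g is well-founded, i.e., T_g has no infinite branch (there is no infinite sequence (U_j)_{j∈ℕ} all of whose finite initial segments lie in T_g). -/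
/-! An infinite branch of `T_g` is a decreasing sequence of nonempty clopen sets `U_j`, each
avoiding the coincidence set of `g` with `φ^{±j}`. If `g ∉ [φ]`, a point `x` with `g x` outside
the `φ`-orbit of `x` lies in all these open avoidance sets, and clopen neighbourhoods of `x` inside
them give a branch. Conversely, by compactness the sets of a branch have a common point `x`,
and `g x = φ^n x` is excluded at level `|n|`. -/

open Set

section FullGroupZ

variable {X : Type*} [TopologicalSpace X]

/-- The full group of the `ℤ`-action generated by a homeomorphism `φ`: all
homeomorphisms `g` such that every `g x` lies in the `φ`-orbit of `x`. -/
def fullGroupZ (φ : X ≃ₜ X) : Subgroup (X ≃ₜ X) where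
  carrier := {g : X ≃ₜ X | ∀ x : X, ∃ n : ℤ, g x = (φ ^ n) x}
  one_mem' := fun x => ⟨0, by rw [zpow_zero]⟩
  mul_mem' := by
    intro a b ha hb x
    obtain ⟨n, hn⟩ := hb x
    obtain ⟨m, hm⟩ := ha (b x)
    refine ⟨m + n, ?_⟩
    show a (b x) = (φ ^ (m + n)) x
    rw [hm, hn, zpow_add]
    rfl
  inv_mem' := by
    intro a ha x
    obtain ⟨n, hn⟩ := ha ((a⁻¹ : X ≃ₜ X) x)
    have hx : a ((a⁻¹ : X ≃ₜ X) x) = x := a.apply_symm_apply x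
    rw [hx] at hn
    refine ⟨-n, ?_⟩
    have key : ∀ y : X, (φ ^ (-n) : X ≃ₜ X) ((φ ^ n : X ≃ₜ X) y) = y := by
      intro y
      have h1 : (φ ^ (-n) * φ ^ n : X ≃ₜ X) = 1 := by
        rw [← zpow_add, neg_add_cancel, zpow_zero]
      calc (φ ^ (-n) : X ≃ₜ X) ((φ ^ n : X ≃ₜ X) y)
          = ((φ ^ (-n) * φ ^ n : X ≃ₜ X)) y := rfl
        _ = y := by rw [h1]; rfl
    calc (a⁻¹ : X ≃ₜ X) x = (φ ^ (-n) : X ≃ₜ X) ((φ ^ n : X ≃ₜ X) ((a⁻¹ : X ≃ₜ X) x)) :=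
          (key _).symm
      _ = (φ ^ (-n) : X ≃ₜ X) x := by rw [← hn]

/-- A homeomorphism is minimal if every orbit `{φ ^ n x : n ∈ ℤ}` is dense. -/
def Homeomorph.IsMinimal (φ : X ≃ₜ X) : Prop :=
  ∀ x : X, Dense (Set.range fun n : ℤ => (φ ^ n) x)

end FullGroupZ


section Trees

variable {X : Type*} [TopologicalSpace X]

/-- The tree `T_g` associated to `g` (relative to `φ`): finite decreasing sequences
`(U_0, …, U_n)` of nonempty clopen sets such that `g x ≠ φ^{±j} x` for all `x ∈ U_j`. -/
def treeOf (φ g : X ≃ₜ X) : Set (List (Set X)) :=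
  {l : List (Set X) |
    (∀ U ∈ l, IsClopen U ∧ U.Nonempty) ∧
    (∀ j : ℕ, ∀ h : j + 1 < l.length,
      l.get ⟨j + 1, h⟩ ⊆ l.get ⟨j, Nat.lt_of_succ_lt h⟩) ∧
    (∀ j : ℕ, ∀ h : j < l.length, ∀ x ∈ l.get ⟨j, h⟩,
      g x ≠ (φ ^ (j : ℤ)) x ∧ g x ≠ (φ ^ (-(j : ℤ))) x)}

/-- The one-step extension relation on nodes of a tree `T`:
`extRel T l₁ l₂` iff `l₁ ∈ T` and `l₁` is a one-step extension of `l₂`.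
A tree is well-founded (has no infinite branch) iff this relation is well-founded. -/
def extRel (T : Set (List (Set X))) (l₁ l₂ : List (Set X)) : Prop :=
  l₁ ∈ T ∧ ∃ U : Set X, l₁ = l₂ ++ [U]

/-- The ordinal rank of a tree: the rank of the root (the node of largest rank) plus one
when the tree is well-founded, and `0` (a junk value) otherwise. -/
noncomputable def treeRank (T : Set (List (Set X))) : Ordinal := by
  classical
  exact if h : WellFounded (extRel T) then
    @IsWellFounded.rank _ (extRel T) ⟨h⟩ ([] : List (Set X)) + 1
  else 0

end Trees

section Compactness

variable {X : Type*} [TopologicalSpace X]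

theorem nonempty_iInter_of_antitone_subset [CompactSpace X] {f V : ℕ → Set X}
    (hf : Antitone f) (hclosed : ∀ n, IsClosed (f n)) (hne : ∀ n, (f n).Nonempty)
    (hV : ∀ n, f n ⊆ V n) : (⋂ n, V n).Nonempty :=
  (IsCompact.nonempty_iInter_of_sequence_nonempty_isCompact_isClosed f (fun n => hf n.le_succ)
    hne (hclosed 0).isCompact hclosed).mono (iInter_mono hV)

theorem exists_antitone_isClopen_mem_subset [CompactSpace X] [T2Space X]
    [TotallyDisconnectedSpace X] {V : ℕ → Set X} (hV : ∀ n, IsOpen (V n)) {x : X}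
    (hx : ∀ n, x ∈ V n) :
    ∃ f : ℕ → Set X, (∀ n, IsClopen (f n)) ∧ Antitone f ∧ (∀ n, x ∈ f n) ∧ ∀ n, f n ⊆ V n := by
  choose W hW hxW hWV using fun n => compact_exists_isClopen_in_isOpen (hV n) (hx n)
  refine ⟨dissipate W, fun n => ?_, antitone_dissipate, fun n => mem_dissipate.2 fun k _ => hxW k,
    fun n => (dissipate_subset le_rfl).trans (hWV n)⟩
  exact (finite_Iic n).isClopen_biInter fun k _ => hW k

end Compactness

section TreeBranches

variable {X : Type*} [TopologicalSpace X]

def offPowSet (φ g : X ≃ₜ X) (j : ℕ) : Set X :=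
  {x | g x ≠ (φ ^ (j : ℤ)) x ∧ g x ≠ (φ ^ (-(j : ℤ))) x}

theorem isOpen_offPowSet [T2Space X] (φ g : X ≃ₜ X) (j : ℕ) : IsOpen (offPowSet φ g j) :=
  (isOpen_ne_fun g.continuous (φ ^ (j : ℤ)).continuous).inter
    (isOpen_ne_fun g.continuous (φ ^ (-(j : ℤ))).continuous)

theorem mem_iInter_offPowSet_iff (φ g : X ≃ₜ X) (x : X) :
    x ∈ ⋂ j, offPowSet φ g j ↔ ∀ n : ℤ, g x ≠ (φ ^ n) x := by
  simp only [mem_iInter, offPowSet, mem_ofPred_eq]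
  refine ⟨fun h n => ?_, fun h j => ⟨h j, h (-j)⟩⟩
  obtain ⟨j, rfl | rfl⟩ := Int.eq_nat_or_neg n
  exacts [(h j).1, (h j).2]

theorem notMem_fullGroupZ_iff (φ g : X ≃ₜ X) :
    g ∉ fullGroupZ φ ↔ (⋂ j, offPowSet φ g j).Nonempty := by
  simp only [Set.Nonempty, mem_iInter_offPowSet_iff]
  exact not_forall.trans (exists_congr fun x => not_exists)

theorem forall_ofFn_mem_treeOf_iff (φ g : X ≃ₜ X) (f : ℕ → Set X) :
    (∀ n : ℕ, (List.ofFn fun i : Fin n => f i) ∈ treeOf φ g) ↔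
      (∀ n, IsClopen (f n) ∧ (f n).Nonempty) ∧ Antitone f ∧ ∀ n, f n ⊆ offPowSet φ g n := by
  simp only [treeOf, mem_ofPred_eq, List.mem_ofFn, List.length_ofFn, List.get_ofFn,
    forall_exists_index, forall_apply_eq_imp_iff]
  refine ⟨fun h => ⟨fun n => (h (n + 1)).1 ⟨n, n.lt_succ_self⟩,
    antitone_nat_of_succ_le fun n => (h (n + 2)).2.1 n (by omega),
    fun n x hx => (h (n + 1)).2.2 n n.lt_succ_self x hx⟩, ?_⟩
  rintro ⟨hclopen, hanti, hsub⟩ n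
  exact ⟨fun i => hclopen i, fun j _ => hanti j.le_succ, fun j _ x hx => hsub j hx⟩

end TreeBranches

theorem mem_fullGroup_iff_tree_wellFounded_general {X : Type*} [TopologicalSpace X] [CompactSpace X]
    [TopologicalSpace.MetrizableSpace X] [TotallyDisconnectedSpace X]
    (φ : X ≃ₜ X) (g : X ≃ₜ X) :
    g ∈ fullGroupZ φ ↔
      ¬ ∃ f : ℕ → Set X, ∀ n : ℕ, (List.ofFn fun i : Fin n => f i) ∈ treeOf φ g := by
  rw [← not_iff_not, not_not, notMem_fullGroupZ_iff]
  simp only [forall_ofFn_mem_treeOf_iff]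
  constructor
  · rintro ⟨x, hx⟩
    obtain ⟨f, hclopen, hanti, hxf, hsub⟩ :=
      exists_antitone_isClopen_mem_subset (isOpen_offPowSet φ g) (mem_iInter.1 hx)
    exact ⟨f, fun n => ⟨hclopen n, x, hxf n⟩, hanti, hsub⟩
  · rintro ⟨f, hf, hanti, hsub⟩
    exact nonempty_iInter_of_antitone_subset hanti (fun n => (hf n).1.isClosed)
      (fun n => (hf n).2) hsub

/-- Lemma: a homeomorphism `g` belongs to the full group of a minimal homeomorphism `φ`
if and only if the associated tree `T_g` is well-founded, i.e. has no infinite branch. -/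
theorem mem_fullGroup_iff_tree_wellFounded {X : Type*} [TopologicalSpace X] [Nonempty X] [CompactSpace X]
    [TopologicalSpace.MetrizableSpace X] [TotallyDisconnectedSpace X] [PerfectSpace X]
    (φ : X ≃ₜ X) (hmin : φ.IsMinimal) (g : X ≃ₜ X) :
    g ∈ fullGroupZ φ ↔
      ¬ ∃ f : ℕ → Set X, ∀ n : ℕ, (List.ofFn fun i : Fin n => f i) ∈ treeOf φ g :=
  mem_fullGroup_iff_tree_wellFounded_general φ g
end

section
/- Let φ be a minimal homeomorphism of a Cantor space X. For g ∈ Homeo(X), let T_g be the tree of finite sequences (U_0, …, U_n) of nonempty clopen subsets of X with U_{j+1} ⊆ U_j and such that g(x) ≠ φ^{±j}(x) for all x ∈ U_j and all j, and let ρ(g) denote the ordinal rank of T_g when T_g is well-founded. If g ∈ [φ] satisfies ρ(g) ≥ ω and h belongs to the topological full group [[φ]], then there are only finitely many ordinals between ρ(g) and ρ(hg); that is, there exists k < ω such that ρ(hg) ≤ ρ(g) + k and ρ(g) ≤ ρ(hg) + k. -/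
open Set

section TopFullGroup

variable {X : Type*} [TopologicalSpace X]

/-- The topological full group of `φ`: homeomorphisms that coincide with a fixed power
of `φ` on each piece of some finite clopen partition of `X`. -/
def topFullGroupZ (φ : X ≃ₜ X) : Set (X ≃ₜ X) :=
  {g : X ≃ₜ X | ∃ n : ℕ, ∃ U : Fin n → Set X,
    (∀ i, IsClopen (U i)) ∧ (⋃ i, U i) = Set.univ ∧
    (Pairwise fun i j => Disjoint (U i) (U j)) ∧
    ∀ i, ∃ k : ℤ, ∀ x ∈ U i, g x = (φ ^ k) x}

end TopFullGroup


/-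
If `h ∈ [[φ]]`, then `h` moves every point by a power `φ ^ m` with `|m| ≤ N` for a fixed `N`.
Hence if `g x ≠ φ ^ i x` for all `|i| ≤ N + j`, then `h (g x) ≠ φ ^ i x` for all `|i| ≤ j`:
deleting the first `N` sets of a node of `T_g` gives a node of `T_{hg}`, and likewise from
`T_{hg}` to `T_g` using `h⁻¹`. A node of length `n` thus has rank at most the rank of its
`N`-fold truncation plus `N - n`, so the two tree ranks differ by at most `N`.
-/

theorem IsWellFounded.rank_le_of_rel_lt {α : Type*} {r : α → α → Prop} [IsWellFounded α r]
    {f : α → Ordinal} (hf : ∀ a b, r a b → f a < f b) (a : α) : rank r a ≤ f a := by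
  induction a using IsWellFounded.induction r with
  | _ a ih =>
    rw [rank_eq]
    exact Ordinal.iSup_le fun b => Order.succ_le_of_lt ((ih b b.2).trans_lt (hf _ _ b.2))

section TreeRank

variable {X : Type*} {T T' : Set (List (Set X))} {N : ℕ}

theorem extRel_drop_or (hmap : ∀ l ∈ T, l.drop N ∈ T') {c l : List (Set X)} (h : extRel T c l) :
    (N ≤ l.length ∧ extRel T' (c.drop N) (l.drop N)) ∨
      (c.drop N = l.drop N ∧ N - l.length = N - c.length + 1) := by
  obtain ⟨hc, U, rfl⟩ := h
  by_cases hN : N ≤ l.length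
  · refine .inl ⟨hN, hmap _ hc, U, ?_⟩
    rw [List.drop_append_of_le_length hN]
  · refine .inr ⟨?_, ?_⟩
    · rw [List.drop_eq_nil_of_le (by simp only [List.length_append, List.length_singleton]; omega),
        List.drop_eq_nil_of_le (by omega)]
    · simp only [List.length_append, List.length_singleton]
      omega

theorem wellFounded_extRel_of_drop_mem (hmap : ∀ l ∈ T, l.drop N ∈ T')
    (hwf : WellFounded (extRel T')) : WellFounded (extRel T) := by
  refine Subrelation.wf (fun {c l} h => ?_)
    (InvImage.wf (fun l => (l.drop N, N - l.length)) (hwf.prod_lex Nat.lt_wfRel.wf))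
  rcases extRel_drop_or hmap h with ⟨-, hrel⟩ | ⟨hdrop, hlen⟩
  · exact Prod.Lex.left _ _ hrel
  · simp only [InvImage, hdrop, hlen]
    exact Prod.Lex.right _ (Nat.lt_succ_self _)

theorem rank_le_rank_drop_add (hmap : ∀ l ∈ T, l.drop N ∈ T')
    [IsWellFounded _ (extRel T)] [IsWellFounded _ (extRel T')] (l : List (Set X)) :
    IsWellFounded.rank (extRel T) l ≤
      IsWellFounded.rank (extRel T') (l.drop N) + ((N - l.length : ℕ) : Ordinal) := by
  refine IsWellFounded.rank_le_of_rel_lt (r := extRel T)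
    (f := fun l => IsWellFounded.rank (extRel T') (l.drop N) + ((N - l.length : ℕ) : Ordinal))
    (fun c l h => ?_) l
  rcases extRel_drop_or hmap h with ⟨hN, hrel⟩ | ⟨hdrop, hlen⟩
  · have hc : N - c.length = 0 := by
      obtain ⟨-, U, rfl⟩ := h
      simp only [List.length_append, List.length_singleton]
      omega
    rw [hc, Nat.sub_eq_zero_of_le hN, Nat.cast_zero, add_zero, add_zero]
    exact IsWellFounded.rank_lt_of_rel hrel
  · rw [hdrop, hlen, Nat.cast_succ]
    exact add_lt_add_right (lt_add_one _) _

theorem treeRank_le_add_of_drop_mem (hmap : ∀ l ∈ T, l.drop N ∈ T')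
    (hmap' : ∀ l ∈ T', l.drop N ∈ T) : treeRank T ≤ treeRank T' + N := by
  by_cases hwf' : WellFounded (extRel T')
  · have hwf := wellFounded_extRel_of_drop_mem hmap hwf'
    let _ : IsWellFounded _ (extRel T) := ⟨hwf⟩
    let _ : IsWellFounded _ (extRel T') := ⟨hwf'⟩
    rw [treeRank, treeRank, dif_pos hwf, dif_pos hwf']
    calc IsWellFounded.rank (extRel T) [] + 1
        ≤ IsWellFounded.rank (extRel T') [] + N + 1 := by
          simpa using add_le_add_left (rank_le_rank_drop_add hmap []) 1
      _ = IsWellFounded.rank (extRel T') [] + 1 + N := by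
          rw [add_assoc, add_assoc, ← Nat.cast_one, ← Nat.cast_add, ← Nat.cast_add, add_comm]
  · have hwf : ¬ WellFounded (extRel T) :=
      fun hwf => hwf' (wellFounded_extRel_of_drop_mem hmap' hwf)
    rw [treeRank, treeRank, dif_neg hwf, dif_neg hwf']
    exact zero_le

end TreeRank

section TreeOf

variable {X : Type*} [TopologicalSpace X]

theorem Homeomorph.zpow_apply_zpow (φ : X ≃ₜ X) (a b : ℤ) (x : X) :
    (φ ^ a) ((φ ^ b) x) = (φ ^ (a + b)) x := by
  rw [← Homeomorph.mul_apply', ← zpow_add]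

def DisplacementLE (φ h : X ≃ₜ X) (N : ℕ) : Prop :=
  ∀ y, ∃ m : ℤ, m.natAbs ≤ N ∧ h y = (φ ^ m) y

theorem DisplacementLE.inv {φ h : X ≃ₜ X} {N : ℕ} (hh : DisplacementLE φ h N) :
    DisplacementLE φ h⁻¹ N := by
  intro y
  obtain ⟨m, hmN, hm⟩ := hh (h⁻¹ y)
  refine ⟨-m, by rwa [Int.natAbs_neg], (φ ^ m).injective ?_⟩
  rw [← hm, Homeomorph.zpow_apply_zpow, add_neg_cancel, zpow_zero]
  exact h.apply_symm_apply y

theorem exists_displacementLE_of_mem_topFullGroupZ {φ h : X ≃ₜ X} (hh : h ∈ topFullGroupZ φ) :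
    ∃ N, DisplacementLE φ h N := by
  obtain ⟨n, U, -, hcover, -, hpow⟩ := hh
  choose k hk using hpow
  refine ⟨Finset.univ.sup fun i => (k i).natAbs, fun y => ?_⟩
  obtain ⟨i, hi⟩ := mem_iUnion.1 (hcover ▸ mem_univ y : y ∈ ⋃ i, U i)
  exact ⟨k i, Finset.le_sup (f := fun i => (k i).natAbs) (Finset.mem_univ i), hk i y hi⟩

theorem getElem_subset_of_mem_treeOf {φ g : X ≃ₜ X} {l : List (Set X)} (hl : l ∈ treeOf φ g)
    {i j : ℕ} (hij : i ≤ j) (hj : j < l.length) : l[j] ⊆ l[i] := by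
  induction j, hij using Nat.le_induction with
  | base => exact subset_rfl
  | succ j hij ih => exact (hl.2.1 j hj).trans (ih (Nat.lt_of_succ_lt hj))

theorem apply_ne_zpow_of_mem_treeOf {φ g : X ≃ₜ X} {l : List (Set X)} (hl : l ∈ treeOf φ g)
    {j : ℕ} (hj : j < l.length) {x : X} (hx : x ∈ l[j]) {m : ℤ} (hm : m.natAbs ≤ j) :
    g x ≠ (φ ^ m) x := by
  have hne := hl.2.2 m.natAbs (hm.trans_lt hj) x (getElem_subset_of_mem_treeOf hl hm hj hx)
  rcases Int.natAbs_eq m with hm | hm <;> rw [hm]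
  exacts [hne.1, hne.2]

theorem drop_mem_treeOf_mul {φ g h : X ≃ₜ X} {N : ℕ} (hh : DisplacementLE φ h N)
    {l : List (Set X)} (hl : l ∈ treeOf φ g) : l.drop N ∈ treeOf φ (h * g) := by
  refine ⟨fun U hU => hl.1 U (List.drop_subset _ _ hU), fun j hj => ?_, fun j hj x hx => ?_⟩
  · simpa only [List.get_eq_getElem, List.getElem_drop, add_assoc] using
      hl.2.1 (N + j) (by simp only [List.length_drop] at hj; omega)
  · simp only [List.get_eq_getElem, List.getElem_drop] at hx
    have hne : ∀ p : ℤ, p.natAbs ≤ j → h (g x) ≠ (φ ^ p) x := by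
      intro p hp hgx
      obtain ⟨m, hmN, hm⟩ := hh (g x)
      refine apply_ne_zpow_of_mem_treeOf hl (by simp only [List.length_drop] at hj; omega) hx
        (m := p - m) (by have := Int.natAbs_sub_le p m; omega) ((φ ^ m).injective ?_)
      rw [← hm, hgx, Homeomorph.zpow_apply_zpow, add_sub_cancel]
    exact ⟨hne j (by simp), hne (-j) (by simp)⟩

end TreeOf

theorem rank_invariant_topFullGroup_general {X : Type*} [TopologicalSpace X]
    (φ : X ≃ₜ X) (g h : X ≃ₜ X)
    (hh : h ∈ topFullGroupZ φ) :
    ∃ k : ℕ, treeRank (treeOf φ (h * g)) ≤ treeRank (treeOf φ g) + (k : Ordinal) ∧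
      treeRank (treeOf φ g) ≤ treeRank (treeOf φ (h * g)) + (k : Ordinal) := by
  obtain ⟨N, hN⟩ := exists_displacementLE_of_mem_topFullGroupZ hh
  have forth : ∀ l ∈ treeOf φ g, l.drop N ∈ treeOf φ (h * g) :=
    fun _ => drop_mem_treeOf_mul hN
  have back : ∀ l ∈ treeOf φ (h * g), l.drop N ∈ treeOf φ g := by
    simpa only [inv_mul_cancel_left] using
      fun l => drop_mem_treeOf_mul (l := l) (g := h * g) hN.inv
  exact ⟨N, treeRank_le_add_of_drop_mem back forth, treeRank_le_add_of_drop_mem forth back⟩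

/-- Lemma 4.4: if `g ∈ [φ]` has tree rank at least `ω` and `h` belongs to the topological
full group `[[φ]]`, then there are only finitely many ordinals between `ρ(g)` and
`ρ(hg)`. -/
theorem rank_invariant_topFullGroup {X : Type*} [TopologicalSpace X] [Nonempty X] [CompactSpace X]
    [TopologicalSpace.MetrizableSpace X] [TotallyDisconnectedSpace X] [PerfectSpace X]
    (φ : X ≃ₜ X) (hmin : φ.IsMinimal) (g h : X ≃ₜ X)
    (hg : g ∈ fullGroupZ φ)
    (hrank : Ordinal.omega0 ≤ treeRank (treeOf φ g))
    (hh : h ∈ topFullGroupZ φ) :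
    ∃ k : ℕ, treeRank (treeOf φ (h * g)) ≤ treeRank (treeOf φ g) + (k : Ordinal) ∧
      treeRank (treeOf φ g) ≤ treeRank (treeOf φ (h * g)) + (k : Ordinal) :=
  rank_invariant_topFullGroup_general φ g h hh
end

section
/- Let G be a Polish group which has a comeager conjugacy class. Then every element of G is a commutator: for every g ∈ G there exist a, b ∈ G with g = a b a⁻¹ b⁻¹. -/
/-!
If the conjugacy class `C` of `c` is comeager, so is its translate `g * C`, so by the Baire
category theorem the two meet: `g = a * b⁻¹` with `a = h c h⁻¹`, `b = k c k⁻¹`. Such a quotient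
is the commutator of `h c h⁻¹` and `k h⁻¹`.
-/

open Filter

theorem preimage_mul_left_mem_residual {G : Type*} [Group G] [TopologicalSpace G]
    [SeparatelyContinuousMul G] {A : Set G} (hA : A ∈ residual G) (g : G) :
    (g * ·) ⁻¹' A ∈ residual G := by
  rw [← (Homeomorph.mulLeft g).residual_map_eq] at hA
  exact hA

theorem exists_mem_residual_eq_mul_inv {G : Type*} [Group G] [TopologicalSpace G]
    [SeparatelyContinuousMul G] [BaireSpace G] {A : Set G} (hA : A ∈ residual G) (g : G) :
    ∃ a ∈ A, ∃ b ∈ A, g = a * b⁻¹ := by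
  obtain ⟨y, hyA, hgyA⟩ :=
    (dense_of_mem_residual (inter_mem hA (preimage_mul_left_mem_residual hA g⁻¹))).nonempty
  exact ⟨y, hyA, g⁻¹ * y, hgyA, by group⟩

theorem conj_mul_inv_conj_eq_commutator {G : Type*} [Group G] (c h k : G) :
    h * c * h⁻¹ * (k * c * k⁻¹)⁻¹ =
      (h * c * h⁻¹) * (k * h⁻¹) * (h * c * h⁻¹)⁻¹ * (k * h⁻¹)⁻¹ := by
  group

/-- Proposition 5.4 (folklore): in a Polish group with a comeager conjugacy class, every
element is a commutator. -/
theorem commutator_of_comeager_conjugacy_class {G : Type*} [Group G] [TopologicalSpace G]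
    [IsTopologicalGroup G] [PolishSpace G]
    (hcomeager : ∃ g : G, {x : G | ∃ h : G, h * g * h⁻¹ = x} ∈ residual G) :
    ∀ g : G, ∃ a b : G, g = a * b * a⁻¹ * b⁻¹ := by
  obtain ⟨c, hc⟩ := hcomeager
  intro g
  obtain ⟨_, ⟨h, rfl⟩, _, ⟨k, rfl⟩, rfl⟩ := exists_mem_residual_eq_mul_inv hc g
  exact ⟨_, _, conj_mul_inv_conj_eq_commutator c h k⟩
end
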